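/- arXiv:1809.10008 — 7 statements merged into one kernel-verified Lean document; each statement's English description precedes it below -/
import Mathlib

section
/- Let z_1 < z be real numbers with z_1^5 > z^3 (so that a squarefree integer l ≤ z^3 cannot have more than 5 prime factors in [z_1, z)). For a squarefree positive integer l all of whose prime factors exceed z_1, write ρ(n, w) = 1 if every prime factor of n exceeds w and ρ(n, w) = 0 otherwise. Then for squarefree l with at most 5 prime factors in [z_1, z): ρ(l, z) ≤ ρ(l, z_1) - (1/2)·∑_{z_1 ≤ p < z, p prime, l = p·m} ρ(m, z_1) + (1/2)·∑_{z_1 ≤ p_1 < p_2 < p_3 < z primes, l = p_1·p_2·p_3·m} ρ(m, p_1). -/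
open Finset

/-- `rho n w` is the indicator (as a real number) that every prime factor of `n`
exceeds the real number `w`. -/
noncomputable def rho (n : ℕ) (w : ℝ) : ℝ :=
  if ∀ p ∈ n.primeFactors, w < (p : ℝ) then 1 else 0

lemma rho_nonneg (n : ℕ) (w : ℝ) : 0 ≤ rho n w := by
  unfold rho; split <;> norm_num

lemma rho_le_one (n : ℕ) (w : ℝ) : rho n w ≤ 1 := by
  unfold rho; split <;> norm_num

lemma rho_eq_one {n : ℕ} {w : ℝ} (h : ∀ p ∈ n.primeFactors, w < (p : ℝ)) :
    rho n w = 1 := by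
  unfold rho; rw [if_pos h]

lemma rho_eq_zero {n : ℕ} {w : ℝ} (h : ¬ ∀ p ∈ n.primeFactors, w < (p : ℝ)) :
    rho n w = 0 := by
  unfold rho; rw [if_neg h]

/-- Pan's sieve-switching inequality: for squarefree `l` all of whose prime factors exceed
`z₁`, with at most 5 prime factors in `[z₁, z)` (guaranteed by `z₁^5 > z^3` for `l ≤ z^3`),
one has
`ρ(l,z) ≤ ρ(l,z₁) - (1/2)∑_{z₁ ≤ p < z, l = pm} ρ(m,z₁)
          + (1/2)∑_{z₁ ≤ p₁<p₂<p₃ < z, l = p₁p₂p₃m} ρ(m,p₁)`. -/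
theorem pan_sieve_switching (z z₁ : ℝ) (hz : z₁ < z) (hz5 : z ^ 3 < z₁ ^ 5)
    (l : ℕ) (hl : 0 < l) (hsq : Squarefree l)
    (hbig : ∀ p ∈ l.primeFactors, z₁ < (p : ℝ))
    (hcard : ((l.primeFactors.filter (fun p : ℕ => z₁ ≤ (p : ℝ) ∧ (p : ℝ) < z)).card ≤ 5)) :
    rho l z ≤ rho l z₁
      - (1 / 2) * ∑ p ∈ l.primeFactors.filter (fun p : ℕ => z₁ ≤ (p : ℝ) ∧ (p : ℝ) < z),
          rho (l / p) z₁
      + (1 / 2) * ∑ p₁ ∈ l.primeFactors.filter (fun p : ℕ => z₁ ≤ (p : ℝ) ∧ (p : ℝ) < z),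
          ∑ p₂ ∈ l.primeFactors.filter (fun p : ℕ => z₁ ≤ (p : ℝ) ∧ (p : ℝ) < z),
          ∑ p₃ ∈ l.primeFactors.filter (fun p : ℕ => z₁ ≤ (p : ℝ) ∧ (p : ℝ) < z),
            (if p₁ < p₂ ∧ p₂ < p₃ then rho (l / (p₁ * p₂ * p₃)) (p₁ : ℝ) else 0) := by
  set S := l.primeFactors.filter (fun p : ℕ => z₁ ≤ (p : ℝ) ∧ (p : ℝ) < z) with hSdef
  have h1 : rho l z₁ = 1 := rho_eq_one hbig
  -- each term of the first sum equals 1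
  have hfirst : ∀ p ∈ S, rho (l / p) z₁ = 1 := by
    intro p hp
    apply rho_eq_one
    intro q hq
    have hpl : p ∣ l := (Nat.mem_primeFactors.mp (mem_filter.mp hp).1).2.1
    apply hbig
    rw [Nat.mem_primeFactors] at hq ⊢
    exact ⟨hq.1, hq.2.1.trans (Nat.div_dvd_of_dvd hpl), hl.ne'⟩
  have hsum1 : ∑ p ∈ S, rho (l / p) z₁ = (S.card : ℝ) := by
    rw [Finset.sum_congr rfl hfirst]; simp
  have hterm_nonneg : ∀ (p₁ p₂ p₃ : ℕ),
      0 ≤ (if p₁ < p₂ ∧ p₂ < p₃ then rho (l / (p₁ * p₂ * p₃)) (p₁ : ℝ) else 0) := by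
    intro p₁ p₂ p₃; split
    · exact rho_nonneg _ _
    · exact le_refl 0
  have hT_nonneg : 0 ≤ ∑ p₁ ∈ S, ∑ p₂ ∈ S, ∑ p₃ ∈ S,
      (if p₁ < p₂ ∧ p₂ < p₃ then rho (l / (p₁ * p₂ * p₃)) (p₁ : ℝ) else 0) := by
    refine Finset.sum_nonneg fun _ _ => Finset.sum_nonneg fun _ _ =>
      Finset.sum_nonneg fun _ _ => hterm_nonneg _ _ _
  by_cases hne : S.Nonempty
  swap
  · -- S is empty: both sums vanish and rho l z ≤ 1 = rho l z₁
    rw [Finset.not_nonempty_iff_eq_empty] at hne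
    rw [hne]
    simp
    linarith [rho_le_one l z, h1]
  · have h0 : rho l z = 0 := by
      apply rho_eq_zero
      push_neg
      obtain ⟨p, hp⟩ := hne
      exact ⟨p, (mem_filter.mp hp).1, le_of_lt (mem_filter.mp hp).2.2⟩
    by_cases hr2 : S.card ≤ 2
    · rw [h0, h1, hsum1]
      have : (S.card : ℝ) ≤ 2 := by exact_mod_cast hr2
      linarith
    · -- S.card ≥ 3
      push_neg at hr2
      set m := S.min' hne with hm
      set M := S.max' hne with hM
      have hmS : m ∈ S := S.min'_mem hne
      have hMS : M ∈ S := S.max'_mem hne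
      have hmM : m < M := S.min'_lt_max'_of_card (by omega)
      -- the key evaluation
      have key : ∀ p₂ ∈ S, m < p₂ → p₂ < M →
          rho (l / (m * p₂ * M)) (m : ℝ) = 1 := by
        intro p₂ hp₂ h12 h23
        have pm : Nat.Prime m := Nat.prime_of_mem_primeFactors (mem_filter.mp hmS).1
        have pp2 : Nat.Prime p₂ := Nat.prime_of_mem_primeFactors (mem_filter.mp hp₂).1
        have pM : Nat.Prime M := Nat.prime_of_mem_primeFactors (mem_filter.mp hMS).1
        have hm' : m ∣ l := Nat.dvd_of_mem_primeFactors (mem_filter.mp hmS).1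
        have hp2' : p₂ ∣ l := Nat.dvd_of_mem_primeFactors (mem_filter.mp hp₂).1
        have hM' : M ∣ l := Nat.dvd_of_mem_primeFactors (mem_filter.mp hMS).1
        have cop1 : Nat.Coprime m p₂ := (Nat.coprime_primes pm pp2).mpr (ne_of_lt h12)
        have cop2 : Nat.Coprime m M := (Nat.coprime_primes pm pM).mpr (ne_of_lt hmM)
        have cop3 : Nat.Coprime p₂ M := (Nat.coprime_primes pp2 pM).mpr (ne_of_lt h23)
        have hd : m * p₂ * M ∣ l :=
          (Nat.Coprime.mul cop2 cop3).mul_dvd_of_dvd_of_dvd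
            (cop1.mul_dvd_of_dvd_of_dvd hm' hp2') hM'
        apply rho_eq_one
        intro q hq
        have hqp : Nat.Prime q := Nat.prime_of_mem_primeFactors hq
        have hqdvd : q ∣ l / (m * p₂ * M) := Nat.dvd_of_mem_primeFactors hq
        have hql : q ∣ l := hqdvd.trans (Nat.div_dvd_of_dvd hd)
        have hqne : q ≠ m := by
          intro h
          have h2 : m * m ∣ (l / (m * p₂ * M)) * (m * p₂ * M) :=
            mul_dvd_mul (h ▸ hqdvd) (dvd_mul_of_dvd_left (dvd_mul_right m p₂) M)
          rw [Nat.div_mul_cancel hd] at h2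
          exact pm.not_isUnit (hsq m h2)
        have hqF : q ∈ l.primeFactors := Nat.mem_primeFactors.mpr ⟨hqp, hql, hl.ne'⟩
        by_cases hqS : q ∈ S
        · have : m ≤ q := S.min'_le q hqS
          exact_mod_cast lt_of_le_of_ne this (Ne.symm hqne)
        · have hz1q : z₁ < (q : ℝ) := hbig q hqF
          have : ¬ (z₁ ≤ (q : ℝ) ∧ (q : ℝ) < z) := by
            intro h
            exact hqS (mem_filter.mpr ⟨hqF, h⟩)
          push_neg at this
          have hzq : z ≤ (q : ℝ) := this (le_of_lt hz1q)
          have hmz : (m : ℝ) < z := (mem_filter.mp hmS).2.2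
          linarith
      -- lower bound for the triple sum
      have hT : (S.card : ℝ) - 2 ≤ ∑ p₁ ∈ S, ∑ p₂ ∈ S, ∑ p₃ ∈ S,
          (if p₁ < p₂ ∧ p₂ < p₃ then rho (l / (p₁ * p₂ * p₃)) (p₁ : ℝ) else 0) := by
        have step1 : ∑ p₂ ∈ S, ∑ p₃ ∈ S,
            (if m < p₂ ∧ p₂ < p₃ then rho (l / (m * p₂ * p₃)) (m : ℝ) else 0) ≤
            ∑ p₁ ∈ S, ∑ p₂ ∈ S, ∑ p₃ ∈ S,
            (if p₁ < p₂ ∧ p₂ < p₃ then rho (l / (p₁ * p₂ * p₃)) (p₁ : ℝ) else 0) := by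
          refine Finset.single_le_sum (f := fun p₁ => ∑ p₂ ∈ S, ∑ p₃ ∈ S,
            (if p₁ < p₂ ∧ p₂ < p₃ then rho (l / (p₁ * p₂ * p₃)) (p₁ : ℝ) else 0)) ?_ hmS
          intro i _
          exact Finset.sum_nonneg fun _ _ => Finset.sum_nonneg fun _ _ => hterm_nonneg _ _ _
        have step2 : ∑ p₂ ∈ S,
            (if m < p₂ ∧ p₂ < M then rho (l / (m * p₂ * M)) (m : ℝ) else 0) ≤
            ∑ p₂ ∈ S, ∑ p₃ ∈ S,
            (if m < p₂ ∧ p₂ < p₃ then rho (l / (m * p₂ * p₃)) (m : ℝ) else 0) := by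
          refine Finset.sum_le_sum ?_
          intro p₂ _
          exact Finset.single_le_sum (f := fun p₃ =>
            (if m < p₂ ∧ p₂ < p₃ then rho (l / (m * p₂ * p₃)) (m : ℝ) else 0))
            (fun _ _ => hterm_nonneg _ _ _) hMS
        have step3 : ∑ p₂ ∈ S,
            (if m < p₂ ∧ p₂ < M then rho (l / (m * p₂ * M)) (m : ℝ) else 0) =
            (S.card : ℝ) - 2 := by
          have : ∀ p₂ ∈ S,
              (if m < p₂ ∧ p₂ < M then rho (l / (m * p₂ * M)) (m : ℝ) else 0) =
              (if p₂ ≠ m ∧ p₂ ≠ M then (1 : ℝ) else 0) := by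
            intro p₂ hp₂
            by_cases h : p₂ ≠ m ∧ p₂ ≠ M
            · have h12 : m < p₂ := lt_of_le_of_ne (S.min'_le p₂ hp₂) (Ne.symm h.1)
              have h23 : p₂ < M := lt_of_le_of_ne (S.le_max' p₂ hp₂) h.2
              rw [if_pos ⟨h12, h23⟩, if_pos h, key p₂ hp₂ h12 h23]
            · rw [if_neg h]
              push_neg at h
              by_cases h' : p₂ = m
              · subst h'; rw [if_neg (by simp)]
              · have := h h'
                subst this
                rw [if_neg (by simp)]
          rw [Finset.sum_congr rfl this, Finset.sum_ite, Finset.sum_const,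
            Finset.sum_const]
          have hfe : S.filter (fun p₂ => p₂ ≠ m ∧ p₂ ≠ M) = (S.erase m).erase M := by
            ext q
            simp only [mem_filter, mem_erase]
            tauto
          have hcard2 : (S.filter (fun p₂ => p₂ ≠ m ∧ p₂ ≠ M)).card = S.card - 2 := by
            rw [hfe, Finset.card_erase_of_mem (Finset.mem_erase.mpr ⟨(ne_of_lt hmM).symm, hMS⟩),
              Finset.card_erase_of_mem hmS]
            omega
          rw [hcard2]
          have h3 : (3 : ℕ) ≤ S.card := hr2
          simp only [smul_zero, add_zero, nsmul_eq_mul, mul_one]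
          rw [Nat.cast_sub (by omega : 2 ≤ S.card)]
          push_cast
          ring
        linarith
      rw [h0, h1, hsum1]
      linarith
end

section
/- Let B be Buchstab's function as defined by B(u) = 0 for u < 1, B(u) = 1/u for 1 ≤ u ≤ 2, and B(u) = (1/u)(k·B(k) + ∫_k^u B(v-1)dv) for k ≤ u ≤ k+1, k ≥ 2 an integer. Then for u > 1 with u ≠ 2, B is differentiable at u away from integer points and satisfies B'(u) = (B(u-1) - B(u))/u; equivalently (u·B(u))' = B(u-1). -/
/-- The Buchstab function satisfies the delayed differential equation: for `u > 1`, `u ≠ 2`,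
away from integer points, `B` is differentiable at `u` with `B'(u) = (B(u-1) - B(u))/u`;
equivalently `(u·B(u))' = B(u-1)` at `u`. -/
theorem buchstab_delayed_ode (B : ℝ → ℝ)
    (h1 : ∀ u : ℝ, u < 1 → B u = 0)
    (h2 : ∀ u : ℝ, 1 ≤ u → u ≤ 2 → B u = 1 / u)
    (h3 : ∀ k : ℕ, 2 ≤ k → ∀ u : ℝ, (k : ℝ) ≤ u → u ≤ (k : ℝ) + 1 →
      B u = (1 / u) * ((k : ℝ) * B k + ∫ v in (k : ℝ)..u, B (v - 1))) :
    ∀ u : ℝ, 1 < u → u ≠ 2 → (¬ ∃ n : ℤ, (n : ℝ) = u) →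
      HasDerivAt B ((B (u - 1) - B u) / u) u ∧
      HasDerivAt (fun t => t * B t) (B (u - 1)) u := by
  -- continuity of B on each interval [k, k+1], k ≥ 1
  have cont : ∀ k : ℕ, 1 ≤ k → ContinuousOn B (Set.Icc (k : ℝ) ((k : ℝ) + 1)) := by
    intro k hk
    induction k, hk using Nat.le_induction with
    | base =>
      have heq : Set.EqOn B (fun t => 1 / t) (Set.Icc ((1 : ℕ) : ℝ) (((1 : ℕ) : ℝ) + 1)) := by
        intro t ht
        exact h2 t (by simpa using ht.1) (by push_cast at ht; linarith [ht.2])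
      refine ContinuousOn.congr ?_ heq
      exact continuousOn_const.div continuousOn_id
        (fun t ht => by push_cast at ht; intro h; rw [h] at ht; linarith [ht.1])
    | succ k hk ih =>
      have hk2 : 2 ≤ k + 1 := by omega
      set K : ℝ := ((k + 1 : ℕ) : ℝ) with hK
      have hKpos : (0 : ℝ) < K := by positivity
      have hgcont : ContinuousOn (fun v => B (v - 1)) (Set.Icc K (K + 1)) := by
        apply ih.comp (continuousOn_id.sub continuousOn_const)
        intro v hv
        simp only [Pi.sub_apply, id_eq, Set.mem_Icc] at hv ⊢
        push_cast [hK] at hv ⊢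
        constructor <;> linarith [hv.1, hv.2]
      have hint : MeasureTheory.IntegrableOn (fun v => B (v - 1)) (Set.uIcc K (K + 1)) := by
        rw [Set.uIcc_of_le (by linarith)]
        exact hgcont.integrableOn_compact isCompact_Icc
      have hprim : ContinuousOn (fun t => ∫ v in K..t, B (v - 1)) (Set.Icc K (K + 1)) := by
        have := intervalIntegral.continuousOn_primitive_interval hint
        rwa [Set.uIcc_of_le (by linarith : K ≤ K + 1)] at this
      have heq : Set.EqOn B
          (fun t => (1 / t) * (K * B K + ∫ v in K..t, B (v - 1))) (Set.Icc K (K + 1)) := by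
        intro t ht
        exact h3 (k + 1) hk2 t ht.1 ht.2
      refine ContinuousOn.congr ?_ heq
      exact (continuousOn_const.div continuousOn_id
        (fun t ht => by simp only [id_eq]; intro h; rw [h] at ht
                        exact absurd ht.1 (by linarith))).mul
        (continuousOn_const.add hprim)
  intro u hu hu2 hnint
  have hu0 : u ≠ 0 := by linarith
  have hmain : HasDerivAt B ((B (u - 1) - B u) / u) u := by
    rcases hu2.lt_or_gt with hlt | hgt
    · -- 1 < u < 2
      have hev : B =ᶠ[nhds u] fun t => t⁻¹ := by
        filter_upwards [Ioo_mem_nhds hu hlt] with t ht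
        rw [h2 t ht.1.le ht.2.le, one_div]
      have hD : HasDerivAt (fun t : ℝ => t⁻¹) (-(u ^ 2)⁻¹) u := hasDerivAt_inv hu0
      have hB : HasDerivAt B (-(u ^ 2)⁻¹) u := hD.congr_of_eventuallyEq hev
      have hv1 : B (u - 1) = 0 := h1 (u - 1) (by linarith)
      have hv2 : B u = 1 / u := h2 u hu.le hlt.le
      rw [hv1, hv2]
      convert hB using 1
      field_simp
      ring
    · -- 2 < u
      obtain ⟨k, hk2, hku, huk⟩ : ∃ k : ℕ, 2 ≤ k ∧ (k : ℝ) < u ∧ u < (k : ℝ) + 1 := by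
        refine ⟨⌊u⌋₊, Nat.le_floor (by exact_mod_cast hgt.le), ?_, Nat.lt_floor_add_one u⟩
        rcases lt_or_eq_of_le (Nat.floor_le (by linarith : (0:ℝ) ≤ u)) with h | h
        · exact h
        · exact absurd ⟨(⌊u⌋₊ : ℤ), by exact_mod_cast h⟩ hnint
      have hkle : (k : ℝ) ≤ u := hku.le
      obtain ⟨m, rfl⟩ := Nat.exists_eq_add_of_le hk2
      have hcast : ((2 + m : ℕ) : ℝ) = (m : ℝ) + 2 := by push_cast; ring
      -- continuity of v ↦ B (v-1) on [k, k+1]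
      have hBc : ContinuousOn B (Set.Icc ((m : ℝ) + 1) ((m : ℝ) + 2)) := by
        have := cont (m + 1) (by omega)
        have h1' : ((m + 1 : ℕ) : ℝ) = (m : ℝ) + 1 := by push_cast; ring
        rw [h1'] at this
        convert this using 2
        ring
      have hgcont : ContinuousOn (fun v => B (v - 1)) (Set.Icc ((m : ℝ) + 2) ((m : ℝ) + 3)) := by
        apply hBc.comp (continuousOn_id.sub continuousOn_const)
        intro v hv
        simp only [Pi.sub_apply, id_eq, Set.mem_Icc] at hv ⊢
        constructor <;> linarith [hv.1, hv.2]
      rw [hcast] at hkle hku huk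
      -- FTC
      have hintI : IntervalIntegrable (fun v => B (v - 1)) MeasureTheory.volume
          ((m : ℝ) + 2) u := by
        apply ContinuousOn.intervalIntegrable
        apply hgcont.mono
        rw [Set.uIcc_of_le hkle]
        exact Set.Icc_subset_Icc le_rfl (by linarith)
      have hmeas : StronglyMeasurableAtFilter (fun v => B (v - 1)) (nhds u) := by
        apply ContinuousOn.stronglyMeasurableAtFilter isOpen_Ioo
          (hgcont.mono Set.Ioo_subset_Icc_self) u
        exact Set.mem_Ioo.mpr ⟨hku, by linarith⟩
      have hcontu : ContinuousAt (fun v => B (v - 1)) u :=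
        hgcont.continuousAt (Icc_mem_nhds (by linarith) (by linarith))
      have hI : HasDerivAt (fun t => ∫ v in ((m : ℝ) + 2)..t, B (v - 1)) (B (u - 1)) u :=
        intervalIntegral.integral_hasDerivAt_right hintI hmeas hcontu
      set C : ℝ := ((m : ℝ) + 2) * B ((m : ℝ) + 2) with hCdef
      have hF : HasDerivAt
          (fun t => t⁻¹ * (C + ∫ v in ((m : ℝ) + 2)..t, B (v - 1)))
          ((-(u ^ 2)⁻¹) * (C + ∫ v in ((m : ℝ) + 2)..u, B (v - 1)) + u⁻¹ * B (u - 1)) u := by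
        have hadd : HasDerivAt (fun t => C + ∫ v in ((m : ℝ) + 2)..t, B (v - 1))
            (B (u - 1)) u := by exact ((hasDerivAt_const u C).add hI).congr_deriv (zero_add _)
        exact (hasDerivAt_inv hu0).mul hadd
      have hev : B =ᶠ[nhds u] fun t => t⁻¹ * (C + ∫ v in ((m : ℝ) + 2)..t, B (v - 1)) := by
        filter_upwards [Ioo_mem_nhds hku huk] with t ht
        have := h3 (2 + m) hk2 t (by rw [hcast]; exact ht.1.le) (by rw [hcast]; linarith [ht.2])
        rw [this, hcast, one_div]
      have hB : HasDerivAt B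
          ((-(u ^ 2)⁻¹) * (C + ∫ v in ((m : ℝ) + 2)..u, B (v - 1)) + u⁻¹ * B (u - 1)) u :=
        hF.congr_of_eventuallyEq hev
      have key : C + (∫ v in ((m : ℝ) + 2)..u, B (v - 1)) = u * B u := by
        have := h3 (2 + m) hk2 u (by rw [hcast]; exact hkle) (by rw [hcast]; linarith)
        rw [hcast] at this
        rw [this]
        field_simp
        rfl
      rw [key] at hB
      convert hB using 1
      field_simp
      ring
  refine ⟨hmain, ?_⟩
  have := (hasDerivAt_id u).mul hmain
  simp only [id] at this
  refine this.congr_deriv ?_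
  rw [mul_div_cancel₀ _ hu0]
  ring
end

section
/- Buchstab's function B satisfies: B(u) = 0 if u < 1; B(u) = 1/u if 1 ≤ u < 2; B(u) = (1 + log(u-1))/u if 2 ≤ u < 3; and B(u) ≤ (1 + log 2)/3 if u ≥ 3. -/
open MeasureTheory Set

set_option maxHeartbeats 1000000 in
/-- Explicit values of Buchstab's function: `B(u) = 0` for `u < 1`, `B(u) = 1/u` for
`1 ≤ u < 2`, `B(u) = (1 + log(u-1))/u` for `2 ≤ u < 3`, and `B(u) ≤ (1 + log 2)/3`
for `u ≥ 3`. -/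
theorem buchstab_values (B : ℝ → ℝ)
    (h1 : ∀ u : ℝ, u < 1 → B u = 0)
    (h2 : ∀ u : ℝ, 1 ≤ u → u ≤ 2 → B u = 1 / u)
    (h3 : ∀ k : ℕ, 2 ≤ k → ∀ u : ℝ, (k : ℝ) ≤ u → u ≤ (k : ℝ) + 1 →
      B u = (1 / u) * ((k : ℝ) * B k + ∫ v in (k : ℝ)..u, B (v - 1))) :
    (∀ u : ℝ, u < 1 → B u = 0) ∧
    (∀ u : ℝ, 1 ≤ u → u < 2 → B u = 1 / u) ∧
    (∀ u : ℝ, 2 ≤ u → u < 3 → B u = (1 + Real.log (u - 1)) / u) ∧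
    (∀ u : ℝ, 3 ≤ u → B u ≤ (1 + Real.log 2) / 3) := by
  -- continuity helpers
  have hinvC : ∀ a b : ℝ, 0 < a → ContinuousOn (fun t : ℝ => 1 / t) (Set.Icc a b) := by
    intro a b ha
    apply continuousOn_const.div continuousOn_id
    intro t ht
    exact ne_of_gt (lt_of_lt_of_le ha ht.1)
  have hB2 : B 2 = 1 / 2 := by
    rw [h2 2 one_le_two le_rfl]
  -- values on [2,3]
  have key2 : ∀ u : ℝ, 2 ≤ u → u ≤ 3 → B u = (1 + Real.log (u - 1)) / u := by
    intro u hu2 hu3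
    have h := h3 2 le_rfl u (by exact_mod_cast hu2) (by push_cast; linarith)
    push_cast at h
    have hcong : (∫ v in (2:ℝ)..u, B (v - 1)) = ∫ v in (2:ℝ)..u, 1 / (v - 1) := by
      apply intervalIntegral.integral_congr
      intro v hv
      rw [Set.uIcc_of_le hu2] at hv
      exact h2 (v - 1) (by linarith [hv.1]) (by linarith [hv.2])
    have hval : (∫ v in (2:ℝ)..u, 1 / (v - 1)) = Real.log (u - 1) := by
      have hcs := intervalIntegral.integral_comp_sub_right (a := (2:ℝ)) (b := u)
        (fun x : ℝ => 1 / x) 1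
      rw [hcs]
      rw [integral_one_div (by
        rw [Set.uIcc_of_le (by linarith : (2:ℝ) - 1 ≤ u - 1)]
        rintro ⟨hh, _⟩
        linarith)]
      norm_num
    rw [hcong, hval, hB2] at h
    rw [h]; field_simp <;> ring
  have hB3 : B 3 = (1 + Real.log 2) / 3 := by
    have := key2 3 (by norm_num) le_rfl
    norm_num at this
    exact this
  -- log facts
  set L : ℝ := Real.log (3 / 2) with hL
  have hL_lb : (1:ℝ) / 3 ≤ L := by
    have h := Real.log_le_sub_one_of_pos (show (0:ℝ) < 2 / 3 by norm_num)
    have hinv : Real.log ((2:ℝ) / 3) = -L := by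
      rw [hL, ← Real.log_inv]; norm_num
    rw [hinv] at h
    linarith
  have hL_ub2 : 2 * L ≤ Real.log 2 + 1 / 8 := by
    have h98 : Real.log ((9:ℝ) / 8) ≤ 1 / 8 := by
      have := Real.log_le_sub_one_of_pos (show (0:ℝ) < 9 / 8 by norm_num)
      linarith
    have e1 : L + L = Real.log ((9:ℝ) / 4) := by
      rw [hL, ← Real.log_mul (by norm_num) (by norm_num)]; norm_num
    have e2 : Real.log ((9:ℝ) / 4) = Real.log 2 + Real.log ((9:ℝ) / 8) := by
      rw [← Real.log_mul (by norm_num) (by norm_num)]; norm_num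
    linarith
  have hlog3 : Real.log 3 = Real.log 2 + L := by
    rw [hL, ← Real.log_mul (by norm_num) (by norm_num)]; norm_num
  have hL_lt : L ≤ 2 / 3 := by
    have := Real.log_two_lt_d9
    linarith
  have hbracket : 2 / 3 + (L - 2 / 3) * L ≤ (1 + Real.log 2) / 3 := by
    have l2lb := Real.log_two_gt_d9
    have l2ub := Real.log_two_lt_d9
    have hq : (0:ℝ) ≤ (L - 1 / 3) * ((Real.log 2 + 1 / 8) / 2 - L) :=
      mul_nonneg (by linarith) (by linarith)
    nlinarith [hq, mul_nonneg (show (0:ℝ) ≤ (Real.log 2 + 1/8)/2 - L by linarith)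
      (show (0:ℝ) ≤ Real.log 2 - 0.6931471803 by linarith)]
  -- chord inequality for log on [2,3]
  have hchord : ∀ s : ℝ, 2 ≤ s → s ≤ 3 → (s - 2) * L ≤ Real.log s - Real.log 2 := by
    intro s hs2 hs3
    have h := strictConcaveOn_log_Ioi.concaveOn.2 (Set.mem_Ioi.2 (by norm_num : (0:ℝ) < 2))
      (Set.mem_Ioi.2 (by norm_num : (0:ℝ) < 3)) (show (0:ℝ) ≤ 3 - s by linarith)
      (show (0:ℝ) ≤ s - 2 by linarith) (by ring)
    simp only [smul_eq_mul] at h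
    rw [show (3 - s) * (2:ℝ) + (s - 2) * 3 = s from by ring] at h
    calc (s - 2) * L = ((3 - s) * Real.log 2 + (s - 2) * Real.log 3) - Real.log 2 := by
          rw [hlog3]; ring
      _ ≤ Real.log s - Real.log 2 := by linarith
  -- integral bound on [2,3]
  have hC : ∀ s : ℝ, 2 ≤ s → s ≤ 3 →
      (∫ t in (2:ℝ)..s, B t) ≤ (s - 2) * ((1 + Real.log 2) / 3) := by
    intro s hs2 hs3
    have hcong : (∫ t in (2:ℝ)..s, B t) = ∫ t in (2:ℝ)..s, (1 + Real.log (t - 1)) / t := by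
      apply intervalIntegral.integral_congr
      intro t ht
      rw [Set.uIcc_of_le hs2] at ht
      exact key2 t ht.1 (le_trans ht.2 hs3)
    have hfc : ContinuousOn (fun t : ℝ => (1 + Real.log (t - 1)) / t) (Set.uIcc 2 s) := by
      rw [Set.uIcc_of_le hs2]
      apply ContinuousOn.div
      · apply continuousOn_const.add
        apply ContinuousOn.log (continuousOn_id.sub continuousOn_const)
        intro t ht
        have h1t : (2:ℝ) ≤ t := ht.1
        intro hcc
        simp only [Pi.sub_apply, id_eq] at hcc
        linarith
      · exact continuousOn_id
      · intro t ht
        have h1t : (2:ℝ) ≤ t := ht.1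
        try simp only [id_eq]
        intro hcc
        linarith
    have hgc : ContinuousOn (fun t : ℝ => 2 / 3 + (L - 2 / 3) * (1 / t)) (Set.uIcc 2 s) := by
      rw [Set.uIcc_of_le hs2]
      exact continuousOn_const.add (continuousOn_const.mul (hinvC 2 s (by norm_num)))
    have hmono : (∫ t in (2:ℝ)..s, (1 + Real.log (t - 1)) / t)
        ≤ ∫ t in (2:ℝ)..s, (2 / 3 + (L - 2 / 3) * (1 / t)) := by
      apply intervalIntegral.integral_mono_on hs2 (hfc.intervalIntegrable)
        (hgc.intervalIntegrable)
      intro t ht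
      have ht2 : 2 ≤ t := ht.1
      have ht0 : (0:ℝ) < t := by linarith
      have hlogb : Real.log (t - 1) ≤ L + (2 / 3) * (t - 1) - 1 := by
        have hpos : (0:ℝ) < (t - 1) / (3 / 2) := div_pos (by linarith) (by norm_num)
        have h := Real.log_le_sub_one_of_pos hpos
        rw [Real.log_div (by linarith) (by norm_num)] at h
        rw [← hL] at h
        have hrw : (t - 1) / (3 / 2) = (2 / 3) * (t - 1) := by ring
        rw [hrw] at h
        linarith
      rw [div_le_iff₀ ht0]
      have hmul : (2 / 3 + (L - 2 / 3) * (1 / t)) * t = (2 / 3) * t + (L - 2 / 3) := by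
        field_simp
      rw [hmul]
      linarith
    have hval : (∫ t in (2:ℝ)..s, (2 / 3 + (L - 2 / 3) * (1 / t)))
        = (2 / 3) * (s - 2) + (L - 2 / 3) * (Real.log s - Real.log 2) := by
      have hii : IntervalIntegrable (fun t : ℝ => 1 / t) volume 2 s := by
        apply ContinuousOn.intervalIntegrable
        rw [Set.uIcc_of_le hs2]
        exact hinvC 2 s (by norm_num)
      rw [intervalIntegral.integral_add intervalIntegrable_const (hii.const_mul _)]
      rw [intervalIntegral.integral_const, intervalIntegral.integral_const_mul]
      rw [integral_one_div (by
        rw [Set.uIcc_of_le hs2]; rintro ⟨hh, _⟩; linarith)]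
      rw [Real.log_div (by linarith) (by norm_num)]
      simp only [smul_eq_mul]
      ring
    rw [hcong]
    have hch := hchord s hs2 hs3
    have h1' : (L - 2 / 3) * (Real.log s - Real.log 2) ≤ (L - 2 / 3) * ((s - 2) * L) := by
      apply mul_le_mul_of_nonpos_left hch (by linarith)
    have h2' : (s - 2) * (2 / 3 + (L - 2 / 3) * L) ≤ (s - 2) * ((1 + Real.log 2) / 3) :=
      mul_le_mul_of_nonneg_left hbracket (by linarith)
    calc (∫ t in (2:ℝ)..s, (1 + Real.log (t - 1)) / t)
        ≤ (2 / 3) * (s - 2) + (L - 2 / 3) * (Real.log s - Real.log 2) := by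
          rw [← hval]; exact hmono
      _ ≤ (2 / 3) * (s - 2) + (L - 2 / 3) * ((s - 2) * L) := by linarith
      _ = (s - 2) * (2 / 3 + (L - 2 / 3) * L) := by ring
      _ ≤ (s - 2) * ((1 + Real.log 2) / 3) := h2'
  -- integrability of B on [1, k]
  have hInt : ∀ k : ℕ, 2 ≤ k → IntegrableOn B (Set.Icc 1 (k:ℝ)) volume := by
    intro k hk
    induction k, hk using Nat.le_induction with
    | base =>
      have hc : IntegrableOn (fun u : ℝ => 1 / u) (Set.Icc 1 2) volume :=
        (hinvC 1 2 one_pos).integrableOn_Icc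
      have : IntegrableOn B (Set.Icc 1 (2:ℝ)) volume :=
        (integrableOn_congr_fun (fun u hu => h2 u hu.1 hu.2) measurableSet_Icc).2 hc
      simpa using this
    | succ n hn ih =>
      have hn2 : (2:ℝ) ≤ (n:ℝ) := by exact_mod_cast hn
      have hsub : IntegrableOn B (Set.Icc ((n:ℝ) - 1) (n:ℝ)) volume :=
        ih.mono_set (Set.Icc_subset_Icc (by linarith) le_rfl)
      have hii : IntervalIntegrable B volume ((n:ℝ) - 1) (n:ℝ) := by
        apply IntegrableOn.intervalIntegrable
        rwa [Set.uIcc_of_le (by linarith : (n:ℝ) - 1 ≤ (n:ℝ))]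
      have hshift : IntervalIntegrable (fun v => B (v - 1)) volume (n:ℝ) ((n:ℝ) + 1) := by
        have := hii.comp_sub_right 1
        simpa using this
      have hcont : ContinuousOn
          (fun u : ℝ => (1 / u) * ((n:ℝ) * B n + ∫ v in (n:ℝ)..u, B (v - 1)))
          (Set.Icc (n:ℝ) ((n:ℝ) + 1)) := by
        apply ContinuousOn.mul (hinvC (n:ℝ) ((n:ℝ) + 1) (by linarith))
        apply continuousOn_const.add
        have hprim := intervalIntegral.continuousOn_primitive_interval'
          (b₁ := (n:ℝ)) (b₂ := (n:ℝ) + 1) hshift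
          (by rw [Set.uIcc_of_le (by linarith : (n:ℝ) ≤ (n:ℝ) + 1)]
              exact Set.left_mem_Icc.2 (by linarith))
        rwa [Set.uIcc_of_le (by linarith : (n:ℝ) ≤ (n:ℝ) + 1)] at hprim
      have hIcc : IntegrableOn B (Set.Icc (n:ℝ) ((n:ℝ) + 1)) volume := by
        apply (integrableOn_congr_fun
          (fun u hu => h3 n hn u hu.1 hu.2) measurableSet_Icc).2
        exact hcont.integrableOn_Icc
      have hfin : IntegrableOn B (Set.Icc 1 ((n:ℝ) + 1)) volume :=
        (ih.union hIcc).mono_set Set.Icc_subset_Icc_union_Icc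
      have hcast : ((n + 1 : ℕ) : ℝ) = (n:ℝ) + 1 := by push_cast; ring
      rwa [hcast]
  -- the main bound for u ≥ 3
  have hJ : ∀ k : ℕ, 3 ≤ k → ∀ u : ℝ, 3 ≤ u → u ≤ (k:ℝ) →
      B u ≤ (1 + Real.log 2) / 3 := by
    intro k hk
    induction k, hk using Nat.le_induction with
    | base =>
      intro u hu3 hu3'
      have : u = 3 := le_antisymm (by exact_mod_cast hu3') hu3
      rw [this, hB3]
    | succ n hn ih =>
      intro u hu3 hun
      rcases le_or_gt u (n:ℝ) with h | h
      · exact ih u hu3 h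
      · have hun' : (n:ℝ) ≤ u := le_of_lt h
        have hun1 : u ≤ (n:ℝ) + 1 := by
          have hcast : ((n + 1 : ℕ) : ℝ) = (n:ℝ) + 1 := by push_cast; ring
          rwa [hcast] at hun
        have heq := h3 n (by omega) u hun' hun1
        have hn3 : (3:ℝ) ≤ (n:ℝ) := by exact_mod_cast hn
        have hBn : B (n:ℝ) ≤ (1 + Real.log 2) / 3 := ih (n:ℝ) hn3 le_rfl
        -- the integral bound
        have hIntShift : IntervalIntegrable (fun v => B (v - 1)) volume (n:ℝ) u := by
          have hI := hInt n (by omega)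
          have hsub : IntegrableOn B (Set.Icc ((n:ℝ) - 1) (u - 1)) volume :=
            hI.mono_set (Set.Icc_subset_Icc (by linarith) (by linarith))
          have hii : IntervalIntegrable B volume ((n:ℝ) - 1) (u - 1) := by
            apply IntegrableOn.intervalIntegrable
            rwa [Set.uIcc_of_le (by linarith : (n:ℝ) - 1 ≤ u - 1)]
          have := hii.comp_sub_right 1
          simpa using this
        have hIbound : (∫ v in (n:ℝ)..u, B (v - 1)) ≤ (u - (n:ℝ)) * ((1 + Real.log 2) / 3) := by
          rcases Nat.lt_or_ge n 4 with h4 | h4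
          · -- n = 3
            have hn3' : n = 3 := by omega
            subst hn3'
            push_cast at hun' hun1 ⊢
            have hsh : (∫ v in (3:ℝ)..u, B (v - 1)) = ∫ t in (2:ℝ)..(u - 1), B t := by
              have hcs := intervalIntegral.integral_comp_sub_right
                (a := (3:ℝ)) (b := u) B 1
              rw [hcs]
              norm_num
            rw [hsh]
            have hCu := hC (u - 1) (by linarith) (by linarith)
            linarith
          · -- n ≥ 4
            have hn4 : (4:ℝ) ≤ (n:ℝ) := by exact_mod_cast h4
            have hptw : ∀ v ∈ Set.Icc (n:ℝ) u, B (v - 1) ≤ (1 + Real.log 2) / 3 := by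
              intro v hv
              exact ih (v - 1) (by linarith [hv.1]) (by linarith [hv.2, hun1])
            have hm := intervalIntegral.integral_mono_on hun' hIntShift
              intervalIntegrable_const hptw
            rwa [intervalIntegral.integral_const, smul_eq_mul] at hm
        have hu0 : (0:ℝ) < u := by linarith
        rw [heq]
        have hsum : (n:ℝ) * B (n:ℝ) + (∫ v in (n:ℝ)..u, B (v - 1))
            ≤ u * ((1 + Real.log 2) / 3) := by
          have h1' : (n:ℝ) * B (n:ℝ) ≤ (n:ℝ) * ((1 + Real.log 2) / 3) :=
            mul_le_mul_of_nonneg_left hBn (by positivity)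
          nlinarith
        have hfinal := mul_le_mul_of_nonneg_left hsum (one_div_nonneg.mpr hu0.le)
        have hid : (1 / u) * (u * ((1 + Real.log 2) / 3)) = (1 + Real.log 2) / 3 := by
          rw [← mul_assoc, one_div_mul_cancel (ne_of_gt hu0), one_mul]
        rw [hid] at hfinal
        exact hfinal
  refine ⟨h1, fun u hu1 hu2' => h2 u hu1 (le_of_lt hu2'),
    fun u hu2' hu3' => key2 u hu2' (le_of_lt hu3'), fun u hu3 => ?_⟩
  exact hJ ⌈u⌉₊ (by exact_mod_cast le_trans hu3 (Nat.le_ceil u)) u hu3 (Nat.le_ceil u)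
end

section
/- Let l_1, l_2 be primitive Gaussian integers (i.e., with coprime real and imaginary parts) and d_1, d_2 squarefree positive integers. The set Γ = {m ∈ ℤ[i] : d_1 | Re(m·conj(l_1)) and d_2 | Re(m·conj(l_2))} is a sublattice of ℤ[i] ≅ ℤ² of index (discriminant) Δ = d_1·d_2 / gcd(d_1, d_2, |Im(l_1·conj(l_2))|). -/
/-- For primitive Gaussian integers `l₁, l₂` and squarefree positive integers `d₁, d₂`,
the sublattice `Γ = {m ∈ ℤ[i] : d₁ ∣ Re(m·conj l₁), d₂ ∣ Re(m·conj l₂)}` of `ℤ[i]` has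
index `Δ = d₁d₂ / gcd(d₁, d₂, |Im(l₁·conj l₂)|)`. -/
theorem lattice_index_formula (l₁ l₂ : GaussianInt)
    (h₁ : IsCoprime l₁.re l₁.im) (h₂ : IsCoprime l₂.re l₂.im)
    (d₁ d₂ : ℕ) (hd₁0 : 0 < d₁) (hd₂0 : 0 < d₂)
    (hd₁ : Squarefree d₁) (hd₂ : Squarefree d₂)
    (Γ : AddSubgroup GaussianInt)
    (hΓ : ∀ m : GaussianInt, m ∈ Γ ↔
      ((d₁ : ℤ) ∣ m.re * l₁.re + m.im * l₁.im ∧ (d₂ : ℤ) ∣ m.re * l₂.re + m.im * l₂.im)) :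
    Γ.index = d₁ * d₂ / Nat.gcd (Nat.gcd d₁ d₂) (l₁.im * l₂.re - l₁.re * l₂.im).natAbs := by
  haveI : NeZero d₁ := ⟨hd₁0.ne'⟩
  haveI : NeZero d₂ := ⟨hd₂0.ne'⟩
  obtain ⟨c, s, hcs⟩ := h₁
  set a₁ := l₁.re with ha₁
  set b₁ := l₁.im with hb₁
  set a₂ := l₂.re with ha₂
  set b₂ := l₂.im with hb₂
  set t : ℤ := a₂ * c + b₂ * s with ht
  set D : ℤ := a₁ * b₂ - a₂ * b₁ with hD
  set g₂ : ℕ := Int.gcd (t * (d₁ : ℤ)) D with hg₂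
  -- coprimality of t and D
  have htD : Int.gcd t D = 1 := by
    rw [← Int.isCoprime_iff_gcd_eq_one]
    obtain ⟨x, y, hxy⟩ := h₂
    exact ⟨x * a₁ + y * b₁, y * c - x * s, by
      rw [ht, hD]; linear_combination hxy + (x * a₂ + y * b₂) * hcs⟩
  -- the auxiliary homomorphisms
  let G : ℤ × ℤ →+ ZMod d₁ × ZMod d₂ :=
  { toFun := fun p => ((p.1 : ZMod d₁), ((t * p.1 + D * p.2 : ℤ) : ZMod d₂))
    map_zero' := by simp
    map_add' := by
      intro p q
      refine Prod.ext ?_ ?_ <;> simp <;> push_cast <;> ring }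
  let ψ : GaussianInt →+ ℤ × ℤ :=
  { toFun := fun m => (m.re * a₁ + m.im * b₁, -(m.re * s) + m.im * c)
    map_zero' := by simp
    map_add' := by
      intro m n
      refine Prod.ext ?_ ?_ <;> simp [Zsqrtd.re_add, Zsqrtd.im_add] <;> ring }
  have hψ : Function.Surjective ψ := by
    intro p
    refine ⟨⟨c * p.1 - b₁ * p.2, s * p.1 + a₁ * p.2⟩, ?_⟩
    have h1 : (c * p.1 - b₁ * p.2) * a₁ + (s * p.1 + a₁ * p.2) * b₁ = p.1 := by
      linear_combination p.1 * hcs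
    have h2 : -((c * p.1 - b₁ * p.2) * s) + (s * p.1 + a₁ * p.2) * c = p.2 := by
      linear_combination p.2 * hcs
    exact Prod.ext h1 h2
  have hΓker : Γ = (G.comp ψ).ker := by
    ext m
    rw [hΓ, AddMonoidHom.mem_ker]
    have key : t * (m.re * a₁ + m.im * b₁) + D * (-(m.re * s) + m.im * c)
        = m.re * a₂ + m.im * b₂ := by
      rw [ht, hD]; linear_combination (m.re * a₂ + m.im * b₂) * hcs
    have : (G.comp ψ) m = (((m.re * a₁ + m.im * b₁ : ℤ) : ZMod d₁),
        ((t * (m.re * a₁ + m.im * b₁) + D * (-(m.re * s) + m.im * c) : ℤ) : ZMod d₂)) := rfl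
    rw [this, Prod.ext_iff, key]
    simp only [Prod.fst_zero, Prod.snd_zero, ZMod.intCast_zmod_eq_zero_iff_dvd]
  -- reduce the index to the cardinality of the range of G
  have hindex : Γ.index = Nat.card G.range := by
    rw [hΓker, ← AddMonoidHom.comap_ker, AddSubgroup.index_comap_of_surjective _ hψ,
      AddSubgroup.index_ker]
  -- split off the first coordinate
  let q : G.range →+ ZMod d₁ := (AddMonoidHom.fst (ZMod d₁) (ZMod d₂)).comp G.range.subtype
  have hqsurj : q.range = ⊤ := by
    rw [AddMonoidHom.range_eq_top]
    intro x
    obtain ⟨u, rfl⟩ := ZMod.intCast_surjective x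
    exact ⟨⟨G (u, 0), ⟨(u, 0), rfl⟩⟩, rfl⟩
  -- the kernel of q is in bijection with the set of second coordinates over 0
  have hker_equiv : Nat.card q.ker
      = Nat.card {y : ZMod d₂ // ((0 : ZMod d₁), y) ∈ G.range} := by
    refine Nat.card_congr ⟨fun z => ⟨z.1.1.2, ?_⟩, fun y => ⟨⟨((0 : ZMod d₁), y.1), y.2⟩, rfl⟩,
      ?_, ?_⟩
    · have h0 : ((0 : ZMod d₁), z.1.1.2) = z.1.1 := Prod.ext z.2.symm rfl
      rw [h0]; exact z.1.2
    · intro z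
      ext
      · exact (z.2 : z.1.1.1 = 0).symm
      · rfl
    · intro y; rfl
  -- identify the fiber with the multiples of g₂
  have hfiber : ∀ y : ZMod d₂, (((0 : ZMod d₁), y) ∈ G.range)
      ↔ y ∈ AddSubgroup.zmultiples ((g₂ : ℕ) : ZMod d₂) := by
    intro y
    constructor
    · rintro ⟨p, hp⟩
      rw [Prod.ext_iff] at hp
      have hp1 : ((p.1 : ℤ) : ZMod d₁) = 0 := hp.1
      have hp2 : ((t * p.1 + D * p.2 : ℤ) : ZMod d₂) = y := hp.2
      obtain ⟨k, hk⟩ := (ZMod.intCast_zmod_eq_zero_iff_dvd _ _).mp hp1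
      obtain ⟨u1, hu1⟩ : (g₂ : ℤ) ∣ t * (d₁ : ℤ) := Int.gcd_dvd_left _ _
      obtain ⟨u2, hu2⟩ : (g₂ : ℤ) ∣ D := Int.gcd_dvd_right _ _
      have hdvd : (g₂ : ℤ) ∣ t * p.1 + D * p.2 :=
        ⟨u1 * k + u2 * p.2, by rw [hk]; linear_combination k * hu1 + p.2 * hu2⟩
      obtain ⟨z, hz⟩ := hdvd
      refine AddSubgroup.mem_zmultiples_iff.mpr ⟨z, ?_⟩
      rw [zsmul_eq_mul, ← hp2, hz]
      push_cast
      ring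
    · intro hy
      obtain ⟨z, hz⟩ := AddSubgroup.mem_zmultiples_iff.mp hy
      refine ⟨((d₁ : ℤ) * Int.gcdA (t * d₁) D * z, Int.gcdB (t * d₁) D * z), ?_⟩
      refine Prod.ext ?_ ?_
      · show ((d₁ * Int.gcdA (t * d₁) D * z : ℤ) : ZMod d₁) = 0
        rw [ZMod.intCast_zmod_eq_zero_iff_dvd]
        exact ⟨Int.gcdA (t * d₁) D * z, by ring⟩
      · show ((t * ((d₁ : ℤ) * Int.gcdA (t * d₁) D * z) + D * (Int.gcdB (t * d₁) D * z) : ℤ)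
            : ZMod d₂) = y
        have hbez : (g₂ : ℤ) = (t * d₁) * Int.gcdA (t * d₁) D + D * Int.gcdB (t * d₁) D :=
          Int.gcd_eq_gcd_ab _ _
        have : t * ((d₁ : ℤ) * Int.gcdA (t * d₁) D * z) + D * (Int.gcdB (t * d₁) D * z)
            = (g₂ : ℤ) * z := by rw [hbez]; ring
        rw [this, ← hz, zsmul_eq_mul]
        push_cast
        ring
  -- compute the cardinality of the range of G
  have hcard : Nat.card G.range = d₁ * (d₂ / Nat.gcd d₂ g₂) := by
    rw [AddSubgroup.card_eq_card_quotient_mul_card_addSubgroup q.ker,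
      Nat.card_congr (QuotientAddGroup.quotientKerEquivRange q).toEquiv, hqsurj]
    congr 1
    · rw [AddSubgroup.card_top, Nat.card_zmod]
    · rw [hker_equiv, Nat.card_congr (Equiv.subtypeEquivRight hfiber),
        Nat.card_zmultiples, ZMod.addOrderOf_coe _ hd₂0.ne']
  -- arithmetic
  have hDabs : (b₁ * a₂ - a₁ * b₂).natAbs = D.natAbs := by
    have : b₁ * a₂ - a₁ * b₂ = -D := by rw [hD]; ring
    rw [this, Int.natAbs_neg]
  have hg₂eq : g₂ = Nat.gcd d₁ D.natAbs := by
    rw [hg₂, Int.gcd, Int.natAbs_mul, Int.natAbs_natCast]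
    exact Nat.Coprime.gcd_mul_left_cancel d₁ htD
  have hgcd : Nat.gcd d₂ g₂ = Nat.gcd (Nat.gcd d₁ d₂) D.natAbs := by
    rw [hg₂eq, Nat.gcd_comm d₂, Nat.gcd_assoc, Nat.gcd_comm D.natAbs, ← Nat.gcd_assoc]
  rw [hindex, hcard, hgcd, hDabs,
    Nat.mul_div_assoc d₁ ((Nat.gcd_dvd_left _ _).trans (Nat.gcd_dvd_right d₁ d₂))]
end

section
/- Define the multiplicative function Ξ(q, a) for gcd(a, q) = 1 by Ξ(q, a) = (ψ'(q)/φ(q))·∑_{c mod q, gcd(c,q)=1} ρ_c(q, a), where ρ_c(q,a) = #{k mod q : k² + c² ≡ a (mod q)} and ψ'(q) = ∏_{p|q}(1 - χ(p)/(p-1))^{-1} with χ the nontrivial character mod 4, and Ξ(q,a) = 0 if gcd(a,q) > 1. Then for every odd prime p, every integer r ≥ 1, and every a coprime to p: Ξ(p^r, a) = Ξ(p, a). -/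
open Finset

noncomputable def chi (n : ℕ) : ℝ :=
  if n % 4 = 1 then 1 else if n % 4 = 3 then -1 else 0

noncomputable def psi' (q : ℕ) : ℝ :=
  ∏ p ∈ q.primeFactors, (1 - chi p / ((p : ℝ) - 1))⁻¹

def rhoCount (q c a : ℕ) : ℕ :=
  ((Finset.range q).filter (fun k => (k ^ 2 + c ^ 2) % q = a % q)).card

noncomputable def Xi (q a : ℕ) : ℝ :=
  if Nat.gcd a q = 1 then
    (psi' q / (Nat.totient q : ℝ)) *
      ∑ c ∈ (Finset.range q).filter (fun c => Nat.gcd c q = 1), (rhoCount q c a : ℝ)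
  else 0

/-- Pairs `(k,c)` with `0 ≤ k,c < q`, `k²+c² ≡ a [MOD q]` and `gcd(c,q)=1`. -/
def solSet (q a : ℕ) : Finset (ℕ × ℕ) :=
  (Finset.range q ×ˢ Finset.range q).filter
    (fun x => (x.1 ^ 2 + x.2 ^ 2) % q = a % q ∧ Nat.gcd x.2 q = 1)

lemma sum_rho_eq (q a : ℕ) :
    ∑ c ∈ (Finset.range q).filter (fun c => Nat.gcd c q = 1), rhoCount q c a
      = (solSet q a).card := by
  rw [Finset.card_eq_sum_card_fiberwise
    (f := fun x => x.2) (t := (Finset.range q).filter (fun c => Nat.gcd c q = 1))]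
  · apply Finset.sum_congr rfl
    intro c hc
    simp only [Finset.mem_filter, Finset.mem_range] at hc
    rw [rhoCount]
    apply Finset.card_bij (fun k _ => (k, c))
    · intro k hk
      simp only [Finset.mem_filter, Finset.mem_range] at hk
      simp only [Finset.mem_filter, solSet, Finset.mem_product, Finset.mem_range]
      exact ⟨⟨⟨hk.1, hc.1⟩, hk.2, hc.2⟩, trivial⟩
    · intro k1 h1 k2 h2 h
      exact (Prod.mk.injEq _ _ _ _ ▸ h).1
    · intro x hx
      simp only [Finset.mem_filter, solSet, Finset.mem_product, Finset.mem_range] at hx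
      obtain ⟨⟨⟨h1, h2⟩, h3, h4⟩, h5⟩ := hx
      refine ⟨x.1, ?_, ?_⟩
      · simp only [Finset.mem_filter, Finset.mem_range]
        exact ⟨h1, by rwa [h5] at h3⟩
      · rw [← h5]
  · intro x hx
    simp only [Finset.mem_coe, solSet, Finset.mem_filter, Finset.mem_product, Finset.mem_range] at hx ⊢
    exact ⟨hx.1.2, hx.2.2⟩

lemma hensel_step (p : ℕ) (hp : p.Prime) (hodd : p ≠ 2) (r : ℕ) (hr : 1 ≤ r) (a : ℕ) :
    (solSet (p ^ (r + 1)) a).card = p * (solSet (p ^ r) a).card := by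
  haveI : Fact p.Prime := ⟨hp⟩
  haveI : NeZero p := ⟨hp.pos.ne'⟩
  set q : ℕ := p ^ r with hq
  set Q : ℕ := p ^ (r + 1) with hQ
  have hq0 : 0 < q := pow_pos hp.pos r
  have hQ0 : 0 < Q := pow_pos hp.pos (r+1)
  have hqQ : q ∣ Q := pow_dvd_pow p (Nat.le_succ r)
  have hQq2 : (Q : ℤ) ∣ (q : ℤ) * q := by
    have : (p : ℤ) ^ (r+1) ∣ (p : ℤ) ^ (2*r) := pow_dvd_pow _ (by omega)
    have h2 : ((q : ℤ)) * q = (p:ℤ) ^ (2*r) := by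
      push_cast [hq]
      ring
    rw [h2, hQ]
    push_cast
    exact this
  have hQqp : (Q : ℤ) = (q : ℤ) * p := by push_cast [hq, hQ]; ring
  -- fiberwise decomposition
  rw [Finset.card_eq_sum_card_fiberwise
      (f := fun x : ℕ × ℕ => (x.1 % q, x.2 % q)) (t := solSet q a)
      (by
        intro x hx
        simp only [Finset.mem_coe, solSet, Finset.mem_filter, Finset.mem_product, Finset.mem_range] at hx ⊢
        obtain ⟨⟨hx1, hx2⟩, hmod, hgcd⟩ := hx
        refine ⟨⟨Nat.mod_lt _ hq0, Nat.mod_lt _ hq0⟩, ?_, ?_⟩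
        · have h1 : ((x.1 % q) ^ 2 + (x.2 % q) ^ 2) % q = (x.1 ^ 2 + x.2 ^ 2) % q := by
            exact Nat.ModEq.add (Nat.ModEq.pow 2 (Nat.mod_modEq _ _))
              (Nat.ModEq.pow 2 (Nat.mod_modEq _ _))
          rw [h1]
          have : (x.1 ^ 2 + x.2 ^ 2) % Q = a % Q := hmod
          calc (x.1 ^ 2 + x.2 ^ 2) % q = ((x.1 ^ 2 + x.2 ^ 2) % Q) % q := by
                rw [Nat.mod_mod_of_dvd _ hqQ]
            _ = (a % Q) % q := by rw [this]
            _ = a % q := by rw [Nat.mod_mod_of_dvd _ hqQ]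
        · have h2 : Nat.Coprime q x.2 := (Nat.Coprime.coprime_dvd_right hqQ hgcd).symm
          rwa [Nat.Coprime, Nat.gcd_rec] at h2)]
  -- each fiber has cardinality p
  rw [Finset.sum_congr rfl (fun y hy => ?_), Finset.sum_const, smul_eq_mul, mul_comm]
  -- y = (K, C) fixed solution mod q
  simp only [solSet, Finset.mem_filter, Finset.mem_product, Finset.mem_range] at hy
  obtain ⟨⟨hK, hC⟩, hmodKC, hgcdC⟩ := hy
  set K : ℕ := y.1 with hKdef
  set C : ℕ := y.2 with hCdef
  -- q ∣ K² + C² - a over ℤ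
  have hdvd : (q : ℤ) ∣ (K : ℤ) ^ 2 + (C : ℤ) ^ 2 - (a : ℤ) := by
    have h := (Nat.modEq_iff_dvd (n := q)).mp hmodKC
    have h2 := (dvd_sub_comm).mp h
    push_cast at h2
    exact_mod_cast h2
  set M : ℤ := ((K : ℤ) ^ 2 + (C : ℤ) ^ 2 - (a : ℤ)) / q with hMdef
  have hM : (q : ℤ) * M = (K : ℤ) ^ 2 + (C : ℤ) ^ 2 - (a : ℤ) := Int.mul_ediv_cancel' hdvd
  -- key equivalence
  have key : ∀ S T : ℕ, (((K + q * S) ^ 2 + (C + q * T) ^ 2) % Q = a % Q)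
      ↔ ((M : ZMod p) + 2 * (K : ZMod p) * (S : ZMod p) + 2 * (C : ZMod p) * (T : ZMod p) = 0) := by
    intro S T
    have hcast : ((M + 2 * K * S + 2 * C * T : ℤ) : ZMod p)
        = (M : ZMod p) + 2 * (K : ZMod p) * (S : ZMod p) + 2 * (C : ZMod p) * (T : ZMod p) := by
      push_cast
      ring
    have h1 : (((K + q * S) ^ 2 + (C + q * T) ^ 2) % Q = a % Q)
        ↔ (Q : ℤ) ∣ (((K:ℤ) + q * S) ^ 2 + ((C:ℤ) + q * T) ^ 2 - a) := by
      rw [show (((K + q * S) ^ 2 + (C + q * T) ^ 2) % Q = a % Q)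
          ↔ Nat.ModEq Q ((K + q * S) ^ 2 + (C + q * T) ^ 2) a from Iff.rfl,
        Nat.modEq_iff_dvd, dvd_sub_comm]
      push_cast
      ring_nf
    have expand : ((K:ℤ) + q * S) ^ 2 + ((C:ℤ) + q * T) ^ 2 - a
        = (q : ℤ) * (M + 2 * K * S + 2 * C * T) + (q : ℤ) * q * (S ^ 2 + T ^ 2) := by
      linear_combination (-1 : ℤ) * hM
    rw [h1, expand, add_comm, dvd_add_right (hQq2.mul_right _), hQqp,
      mul_dvd_mul_iff_left (by exact_mod_cast hq0.ne' : (q : ℤ) ≠ 0)]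
    rw [← hcast]
    exact (ZMod.intCast_zmod_eq_zero_iff_dvd _ p).symm
  -- (C : ZMod p) and 2 are nonzero
  have hCp : Nat.Coprime C p := by
    have : p ∣ q := dvd_pow_self p (Nat.one_le_iff_ne_zero.mp hr)
    exact Nat.Coprime.coprime_dvd_right this hgcdC
  have hCne : (C : ZMod p) ≠ 0 := by
    rw [Ne, ZMod.natCast_eq_zero_iff]
    intro h
    have := Nat.Coprime.eq_one_of_dvd hCp.symm h
    exact hp.one_lt.ne' this
  have h2ne : (2 : ZMod p) ≠ 0 := by
    have : ((2 : ℕ) : ZMod p) ≠ 0 := by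
      rw [Ne, ZMod.natCast_eq_zero_iff]
      intro h
      exact hodd ((Nat.prime_dvd_prime_iff_eq hp Nat.prime_two).mp h)
    exact_mod_cast this
  have h2Cne : (2 * (C : ZMod p)) ≠ 0 := mul_ne_zero h2ne hCne
  -- the "line" in (ZMod p)²
  set line : Finset (ZMod p × ZMod p) :=
    Finset.univ.filter (fun st => (M : ZMod p) + 2 * K * st.1 + 2 * C * st.2 = 0) with hline
  have hcan : (2 * (C : ZMod p))⁻¹ * (2 * (C : ZMod p)) = 1 := inv_mul_cancel₀ h2Cne
  have hlinecard : line.card = p := by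
    rw [hline]
    rw [Finset.card_bij' (fun st _ => st.1)
      (fun s _ => (s, -(2 * (C : ZMod p))⁻¹ * ((M : ZMod p) + 2 * K * s)))
      (fun st hst => Finset.mem_univ _)
      (fun s hs => by
        simp only [Finset.mem_filter, Finset.mem_univ, true_and]
        linear_combination (-((M : ZMod p) + 2 * K * s)) * hcan)
      (fun st hst => by
        simp only [Finset.mem_filter, Finset.mem_univ, true_and] at hst
        ext
        · rfl
        · simp only
          linear_combination (-(2 * (C : ZMod p))⁻¹) * hst + st.2 * hcan)
      (fun s hs => rfl)]
    simp [ZMod.card]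
  rw [← hlinecard]
  -- bijection between the fiber and the line
  apply Finset.card_bij' (fun x _ => (((x.1 / q : ℕ) : ZMod p), ((x.2 / q : ℕ) : ZMod p)))
    (fun st _ => (K + q * st.1.val, C + q * st.2.val))
  · -- fiber → line
    intro x hx
    simp only [solSet, Finset.mem_filter, Finset.mem_product, Finset.mem_range] at hx
    obtain ⟨⟨⟨hx1, hx2⟩, hxmod, hxgcd⟩, hxfib⟩ := hx
    have hfib1 : x.1 % q = K := congrArg Prod.fst hxfib
    have hfib2 : x.2 % q = C := congrArg Prod.snd hxfib
    have hxx1 : K + q * (x.1 / q) = x.1 := by rw [← hfib1]; exact Nat.mod_add_div _ _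
    have hxx2 : C + q * (x.2 / q) = x.2 := by rw [← hfib2]; exact Nat.mod_add_div _ _
    have := (key (x.1 / q) (x.2 / q)).mp (by rw [hxx1, hxx2]; exact hxmod)
    simp only [hline, Finset.mem_filter, Finset.mem_univ, true_and]
    exact this
  · -- line → fiber
    intro st hst
    simp only [hline, Finset.mem_filter, Finset.mem_univ, true_and] at hst
    simp only [solSet, Finset.mem_filter, Finset.mem_product, Finset.mem_range]
    have hS : st.1.val < p := ZMod.val_lt st.1
    have hT : st.2.val < p := ZMod.val_lt st.2
    have hQqp' : Q = q * p := by rw [hq, hQ, pow_succ]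
    have hb1 : K + q * st.1.val < Q := by
      have h1 : st.1.val + 1 ≤ p := hS
      have h2 : q * (st.1.val + 1) ≤ q * p := Nat.mul_le_mul_left _ h1
      have h4 : q * (st.1.val + 1) = q * st.1.val + q := by ring
      omega
    have hb2 : C + q * st.2.val < Q := by
      have h1 : st.2.val + 1 ≤ p := hT
      have h2 : q * (st.2.val + 1) ≤ q * p := Nat.mul_le_mul_left _ h1
      have h4 : q * (st.2.val + 1) = q * st.2.val + q := by ring
      omega
    refine ⟨⟨⟨hb1, hb2⟩, ?_, ?_⟩, ?_⟩
    · apply (key st.1.val st.2.val).mpr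
      have e1 : ((st.1.val : ℕ) : ZMod p) = st.1 := by simp [ZMod.natCast_val, ZMod.cast_id]
      have e2 : ((st.2.val : ℕ) : ZMod p) = st.2 := by simp [ZMod.natCast_val, ZMod.cast_id]
      rw [e1, e2]
      exact hst
    · -- gcd (C + q * T) Q = 1
      have h1 : Nat.Coprime p (C + q * st.2.val) := by
        have hqp : p ∣ q := dvd_pow_self p (Nat.one_le_iff_ne_zero.mp hr)
        obtain ⟨m, hm⟩ := hqp
        rw [hm, mul_assoc]
        exact (Nat.coprime_add_mul_left_right p C _).mpr (Nat.coprime_comm.mp hCp)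
      have := (h1.pow_left (r + 1)).symm
      rwa [hQ]
    · -- fiber condition
      have m1 : (K + q * st.1.val) % q = K := by
        rw [Nat.add_mul_mod_self_left]
        exact Nat.mod_eq_of_lt hK
      have m2 : (C + q * st.2.val) % q = C := by
        rw [Nat.add_mul_mod_self_left]
        exact Nat.mod_eq_of_lt hC
      simp [m1, m2, hKdef, hCdef]
      exact Prod.ext (Nat.mod_eq_of_lt hK) (Nat.mod_eq_of_lt hC)
  · -- left inverse
    intro x hx
    simp only [solSet, Finset.mem_filter, Finset.mem_product, Finset.mem_range] at hx
    obtain ⟨⟨⟨hx1, hx2⟩, hxmod, hxgcd⟩, hxfib⟩ := hx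
    have hfib1 : x.1 % q = K := congrArg Prod.fst hxfib
    have hfib2 : x.2 % q = C := congrArg Prod.snd hxfib
    have hd1 : x.1 / q < p := by
      rw [Nat.div_lt_iff_lt_mul hq0]
      calc x.1 < Q := hx1
        _ = q * p := by rw [hq, hQ, pow_succ]
        _ = p * q := mul_comm _ _
    have hd2 : x.2 / q < p := by
      rw [Nat.div_lt_iff_lt_mul hq0]
      calc x.2 < Q := hx2
        _ = q * p := by rw [hq, hQ, pow_succ]
        _ = p * q := mul_comm _ _
    have v1 : ((x.1 / q : ℕ) : ZMod p).val = x.1 / q := ZMod.val_cast_of_lt hd1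
    have v2 : ((x.2 / q : ℕ) : ZMod p).val = x.2 / q := ZMod.val_cast_of_lt hd2
    ext
    · simp only [v1]
      rw [← hfib1]
      exact Nat.mod_add_div _ _
    · simp only [v2]
      rw [← hfib2]
      exact Nat.mod_add_div _ _
  · -- right inverse
    intro st hst
    have d1 : (K + q * st.1.val) / q = st.1.val := by
      rw [Nat.add_mul_div_left _ _ hq0, Nat.div_eq_of_lt hK, zero_add]
    have d2 : (C + q * st.2.val) / q = st.2.val := by
      rw [Nat.add_mul_div_left _ _ hq0, Nat.div_eq_of_lt hC, zero_add]
    ext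
    · simp only [d1]
      simp [ZMod.natCast_val, ZMod.cast_id]
    · simp only [d2]
      simp [ZMod.natCast_val, ZMod.cast_id]

lemma solSet_pow (p : ℕ) (hp : p.Prime) (hodd : p ≠ 2) (r : ℕ) (hr : 1 ≤ r) (a : ℕ) :
    (solSet (p ^ r) a).card = p ^ (r - 1) * (solSet p a).card := by
  induction r with
  | zero => omega
  | succ n ih =>
    rcases Nat.lt_or_ge 1 (n+1) with h | h
    · have hn : 1 ≤ n := by omega
      rw [hensel_step p hp hodd n hn a, ih hn]
      have : n + 1 - 1 = (n - 1) + 1 := by omega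
      rw [this, pow_succ]
      ring
    · have : n = 0 := by omega
      subst this
      simp [pow_one]

/-- For every odd prime `p`, every `r ≥ 1` and every `a` coprime to `p`:
`Ξ(p^r, a) = Ξ(p, a)`. -/
theorem Xi_prime_power (p : ℕ) (hp : p.Prime) (hodd : p ≠ 2) (r : ℕ) (hr : 1 ≤ r)
    (a : ℕ) (ha : Nat.Coprime a p) :
    Xi (p ^ r) a = Xi p a := by
  have hgr : Nat.gcd a (p ^ r) = 1 := Nat.Coprime.pow_right r ha
  have hg1 : Nat.gcd a p = 1 := ha
  rw [Xi, Xi, if_pos hgr, if_pos hg1]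
  have hpsi : psi' (p ^ r) = psi' p := by
    rw [psi', psi', Nat.primeFactors_pow p (by omega)]
  have htot : (Nat.totient (p ^ r) : ℝ) = (p : ℝ) ^ (r - 1) * (Nat.totient p : ℝ) := by
    rw [Nat.totient_prime_pow hp hr, Nat.totient_prime hp]
    push_cast
    ring
  have hsum : ∑ c ∈ (Finset.range (p^r)).filter (fun c => Nat.gcd c (p^r) = 1),
      (rhoCount (p^r) c a : ℝ)
      = (p : ℝ) ^ (r - 1) * ∑ c ∈ (Finset.range p).filter (fun c => Nat.gcd c p = 1),
      (rhoCount p c a : ℝ) := by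
    have h1 := sum_rho_eq (p^r) a
    have h2 := sum_rho_eq p a
    have h3 := solSet_pow p hp hodd r hr a
    have : ∑ c ∈ (Finset.range (p^r)).filter (fun c => Nat.gcd c (p^r) = 1),
        (rhoCount (p^r) c a : ℝ) = ((solSet (p^r) a).card : ℝ) := by
      rw [← h1]; push_cast; rfl
    rw [this, h3]
    have : ∑ c ∈ (Finset.range p).filter (fun c => Nat.gcd c p = 1),
        (rhoCount p c a : ℝ) = ((solSet p a).card : ℝ) := by
      rw [← h2]; push_cast; rfl
    rw [this]; push_cast; ring
  rw [hpsi, htot, hsum]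
  have hp0 : (p : ℝ) ^ (r - 1) ≠ 0 := pow_ne_zero _ (by exact_mod_cast hp.pos.ne')
  have ht0 : (Nat.totient p : ℝ) ≠ 0 :=
    Nat.cast_ne_zero.mpr (Nat.totient_pos.mpr hp.pos).ne'
  field_simp
end

section
/- Let W ≥ 1, b, q, a be integers with gcd(q, W) > 1, gcd(a, q) = 1, 4 | W, and suppose p | W for every odd prime p | gcd(q, W)·W. Write q = q_W · q_r where q_W is the largest divisor of q composed of primes dividing W. Then ∑_{c mod q} e(ac/q)·Ξ(Wq, Wc + b) = 0, where Ξ is the multiplicative function from the distribution of Fouvry–Iwaniec primes satisfying Ξ(p^r, a) = Ξ(p, a) for odd p, Ξ(2^r, a) = Ξ(4, a) for r ≥ 2, and Ξ(q_1 q_2, a) = Ξ(q_1, a)Ξ(q_2, a) for coprime q_1, q_2. -/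
open Finset

/-- Vanishing of the twisted complete exponential sum for moduli sharing a factor with `W`:
if `Ξ` is a function of a modulus and a residue, multiplicative in the modulus, periodic in
the residue, with `Ξ(p^r, a) = Ξ(p, a)` for odd primes and `Ξ(2^r, a) = Ξ(4, a)` for
`r ≥ 2`, and if `4 ∣ W`, `gcd(q, W) > 1`, `gcd(a, q) = 1`, and every odd prime dividing
`gcd(q,W)·W` divides `W`, then `∑_{c mod q} e(ac/q)·Ξ(Wq, Wc + b) = 0`. -/
theorem exponential_sum_Xi_vanishes (Ξ : ℕ → ℤ → ℂ)
    (hper : ∀ (q : ℕ) (a b : ℤ), a ≡ b [ZMOD (q : ℤ)] → Ξ q a = Ξ q b)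
    (hoddp : ∀ p : ℕ, p.Prime → p ≠ 2 → ∀ r : ℕ, 1 ≤ r → ∀ a : ℤ, Ξ (p ^ r) a = Ξ p a)
    (h2 : ∀ r : ℕ, 2 ≤ r → ∀ a : ℤ, Ξ (2 ^ r) a = Ξ 4 a)
    (hmul : ∀ q₁ q₂ : ℕ, Nat.Coprime q₁ q₂ → ∀ a : ℤ, Ξ (q₁ * q₂) a = Ξ q₁ a * Ξ q₂ a)
    (W q : ℕ) (a b : ℤ)
    (hW : 1 ≤ W) (hW4 : 4 ∣ W) (hgcd : 1 < Nat.gcd q W)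
    (ha : IsCoprime a (q : ℤ))
    (hodd : ∀ p : ℕ, p.Prime → p ≠ 2 → p ∣ Nat.gcd q W * W → p ∣ W) :
    ∑ c ∈ Finset.range q,
        Complex.exp (2 * Real.pi * Complex.I * (a * c) / q) * Ξ (W * q) (W * c + b) = 0 := by
  rcases Nat.eq_zero_or_pos q with hq0 | hqpos
  · subst hq0; simp
  -- Key congruence lemma: Ξ M is periodic mod n provided every odd prime of M divides n
  -- and 4 ∣ n when M is even.
  have XiA : ∀ M n : ℕ, (∀ p : ℕ, p.Prime → p ≠ 2 → p ∣ M → p ∣ n) → (2 ∣ M → 4 ∣ n) →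
      ∀ x y : ℤ, x ≡ y [ZMOD (n : ℤ)] → Ξ M x = Ξ M y := by
    intro M
    induction M using Nat.recOnPosPrimePosCoprime with
    | prime_pow p r hp hr =>
      intro n hop h2n x y hxy
      have hpp : p.Prime := hp
      rcases eq_or_ne p 2 with rfl | hne
      · have h4 : (4 : ℕ) ∣ n := h2n (dvd_pow_self 2 hr.ne')
        rcases Nat.lt_or_ge r 2 with hr2 | hr2
        · interval_cases r
          · exact hper (2 ^ 1) x y (by
              have h2d : ((2 ^ 1 : ℕ) : ℤ) ∣ (n : ℤ) := by
                exact_mod_cast dvd_trans (by norm_num) h4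
              exact hxy.of_dvd h2d)
        · rw [h2 r hr2 x, h2 r hr2 y]
          exact hper 4 x y (hxy.of_dvd (by exact_mod_cast h4))
      · have hpn : p ∣ n := hop p hpp hne (dvd_pow_self p hr.ne')
        rw [hoddp p hpp hne r hr x, hoddp p hpp hne r hr y]
        exact hper p x y (hxy.of_dvd (by exact_mod_cast hpn))
    | zero =>
      intro n hop h2n x y hxy
      rcases Nat.eq_zero_or_pos n with rfl | hn
      · have : x = y := by simpa [Int.ModEq] using hxy
        rw [this]
      · exfalso
        obtain ⟨p, hpn, hpp⟩ := Nat.exists_infinite_primes (n + 1)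
        have h4 : (4 : ℕ) ∣ n := h2n (dvd_zero 2)
        have hn4 : 4 ≤ n := Nat.le_of_dvd hn h4
        have hne : p ≠ 2 := by omega
        have hd : p ∣ n := hop p hpp hne (dvd_zero p)
        have := Nat.le_of_dvd hn hd
        omega
    | one =>
      intro n _ _ x y _
      exact hper 1 x y (by simp [Int.ModEq, Int.emod_one])
    | coprime a' b' ha1 hb1 hcop iha ihb =>
      intro n hop h2n x y hxy
      rw [hmul a' b' hcop x, hmul a' b' hcop y,
        iha n (fun p hp hne hd => hop p hp hne (hd.mul_right _))
          (fun hd => h2n (hd.mul_right _)) x y hxy,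
        ihb n (fun p hp hne hd => hop p hp hne (hd.mul_left _))
          (fun hd => h2n (hd.mul_left _)) x y hxy]
  -- the W-part `qW` of `q`, and the complementary part `qr`
  set qW : ℕ := Nat.gcd q (W ^ q) with hqWdef
  have hqWdvd : qW ∣ q := Nat.gcd_dvd_left _ _
  set qr : ℕ := q / qW with hqrdef
  have hq : q = qW * qr := (Nat.mul_div_cancel' hqWdvd).symm
  have hqWpos : 0 < qW := by
    rcases Nat.eq_zero_or_pos qW with h | h
    · rw [hq, h] at hqpos; simp at hqpos
    · exact h
  have hqrpos : 0 < qr := by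
    rcases Nat.eq_zero_or_pos qr with h | h
    · rw [hq, h] at hqpos; simp at hqpos
    · exact h
  -- every prime of qW divides W
  have hqWprime : ∀ p : ℕ, p.Prime → p ∣ qW → p ∣ W := fun p hpp hpd =>
    hpp.dvd_of_dvd_pow (hpd.trans (Nat.gcd_dvd_right _ _))
  -- qW > 1
  have hqW1 : 1 < qW := by
    obtain ⟨p, hpp, hpd⟩ := Nat.exists_prime_and_dvd (show Nat.gcd q W ≠ 1 by omega)
    have hpq : p ∣ q := hpd.trans (Nat.gcd_dvd_left _ _)
    have hpW : p ∣ W := hpd.trans (Nat.gcd_dvd_right _ _)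
    have hpqW : p ∣ qW := Nat.dvd_gcd hpq (hpW.trans (dvd_pow_self W hqpos.ne'))
    exact lt_of_lt_of_le hpp.one_lt (Nat.le_of_dvd hqWpos hpqW)
  -- qr is coprime to W
  have hcoprW : Nat.Coprime qr W := by
    by_contra hc
    obtain ⟨p, hpp, hpqr, hpW⟩ := Nat.Prime.not_coprime_iff_dvd.mp hc
    have hq0 : q ≠ 0 := hqpos.ne'
    have hWq0 : W ^ q ≠ 0 := pow_ne_zero _ (by omega)
    have e1 : qW.factorization p = min (q.factorization p) ((W ^ q).factorization p) := by
      rw [hqWdef, Nat.factorization_gcd hq0 hWq0]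
      simp [Finsupp.inf_apply]
    have e2 : (W ^ q).factorization p = q * W.factorization p := by
      rw [Nat.factorization_pow]; simp
    have hWfp : 1 ≤ W.factorization p :=
      (Nat.Prime.factorization_pos_of_dvd hpp (by omega) hpW)
    have hqfp : q.factorization p < q := Nat.factorization_lt p hq0
    have e3 : qW.factorization p = q.factorization p := by
      rw [e1, e2]
      exact min_eq_left (le_trans hqfp.le (Nat.le_mul_of_pos_right q hWfp))
    have e4 : qr.factorization p = 0 := by
      rw [hqrdef, Nat.factorization_div hqWdvd]
      simp [e3]
    have : 0 < qr.factorization p :=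
      Nat.Prime.factorization_pos_of_dvd hpp hqrpos.ne' hpqr
    omega
  -- qW is coprime to qr
  have hcopWr : Nat.Coprime qW qr := by
    by_contra hc
    obtain ⟨p, hpp, hpqW, hpqr⟩ := Nat.Prime.not_coprime_iff_dvd.mp hc
    have hpW : p ∣ W := hqWprime p hpp hpqW
    have : p ∣ Nat.gcd qr W := Nat.dvd_gcd hpqr hpW
    rw [hcoprW] at this
    exact hpp.one_lt.ne' (Nat.eq_one_of_dvd_one this)
  -- qW does not divide a
  have hqWa : ¬ ((qW : ℤ) ∣ a) := by
    intro hd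
    have hu : IsUnit ((qW : ℤ)) :=
      ha.isUnit_of_dvd' hd (Int.natCast_dvd_natCast.mpr hqWdvd)
    rw [Int.isUnit_iff] at hu
    rcases hu with h | h <;> omega
  -- the geometric sum over the qW-component vanishes
  set z : ℂ := Complex.exp (2 * Real.pi * Complex.I * a / qW) with hzdef
  have hqWC : (qW : ℂ) ≠ 0 := Nat.cast_ne_zero.mpr hqWpos.ne'
  have hz1 : z ≠ 1 := by
    intro h
    rw [hzdef, Complex.exp_eq_one_iff] at h
    obtain ⟨n, hn⟩ := h
    apply hqWa
    refine ⟨n, ?_⟩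
    have h2pi : (2 * (Real.pi : ℂ) * Complex.I) ≠ 0 := Complex.two_pi_I_ne_zero
    have : (a : ℂ) = (qW : ℂ) * n := by
      field_simp at hn
      have hn' : 2 * (Real.pi : ℂ) * Complex.I * a = 2 * (Real.pi : ℂ) * Complex.I * ((qW : ℂ) * n) := by
        rw [hn]
      exact mul_left_cancel₀ h2pi hn'
    exact_mod_cast this
  have hzpow : z ^ qW = 1 := by
    rw [hzdef, ← Complex.exp_nat_mul]
    have : (qW : ℂ) * (2 * Real.pi * Complex.I * a / qW) = a * (2 * Real.pi * Complex.I) := by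
      field_simp
    rw [this]
    exact_mod_cast Complex.exp_int_mul_two_pi_mul_I a
  have hzero : ∑ j ∈ Finset.range qW, z ^ j = 0 := by
    rw [geom_sum_eq hz1, hzpow]
    simp
  -- pointwise identity for the summand at c = d + qr * j
  have hqC : (q : ℂ) = (qW : ℂ) * qr := by exact_mod_cast congrArg (Nat.cast : ℕ → ℂ) hq
  have hqrC : (qr : ℂ) ≠ 0 := Nat.cast_ne_zero.mpr hqrpos.ne'
  have key : ∀ d j : ℕ,
      Complex.exp (2 * Real.pi * Complex.I * (a * (d + qr * j : ℕ)) / q) *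
          Ξ (W * q) (W * ((d + qr * j : ℕ) : ℤ) + b)
        = (Complex.exp (2 * Real.pi * Complex.I * (a * d) / q) * Ξ (W * q) (W * d + b)) * z ^ j := by
    intro d j
    have hXi : Ξ (W * q) (W * ((d + qr * j : ℕ) : ℤ) + b) = Ξ (W * q) (W * d + b) := by
      apply XiA (W * q) (W * qr)
      · intro p hpp hne hd
        rcases (Nat.Prime.dvd_mul hpp).mp hd with h | h
        · exact dvd_mul_of_dvd_left h qr
        · rw [hq] at h
          rcases (Nat.Prime.dvd_mul hpp).mp h with h' | h'
          · exact dvd_mul_of_dvd_left (hqWprime p hpp h') qr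
          · exact dvd_mul_of_dvd_right h' W
      · intro _
        exact dvd_mul_of_dvd_left hW4 qr
      · rw [Int.modEq_comm, Int.modEq_iff_dvd]
        refine ⟨j, ?_⟩
        push_cast
        ring
    rw [hXi]
    have hexp : Complex.exp (2 * Real.pi * Complex.I * (a * (d + qr * j : ℕ)) / q)
        = Complex.exp (2 * Real.pi * Complex.I * (a * d) / q) * z ^ j := by
      rw [hzdef, ← Complex.exp_nat_mul, ← Complex.exp_add]
      congr 1
      rw [hqC]
      push_cast
      field_simp
    rw [hexp]
    ring
  -- reindex the sum over `range q` by pairs `(d, j)` with `c = d + qr * j`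
  have hreindex : ∑ c ∈ Finset.range q,
        Complex.exp (2 * Real.pi * Complex.I * (a * c) / q) * Ξ (W * q) (W * c + b)
      = ∑ p ∈ Finset.range qr ×ˢ Finset.range qW,
          Complex.exp (2 * Real.pi * Complex.I * (a * (p.1 + qr * p.2 : ℕ)) / q) *
            Ξ (W * q) (W * ((p.1 + qr * p.2 : ℕ) : ℤ) + b) := by
    apply Finset.sum_nbij' (i := fun c => ((c % qr, c / qr) : ℕ × ℕ))
      (j := fun p => p.1 + qr * p.2)
    · intro c hc
      rw [Finset.mem_range] at hc
      rw [Finset.mem_product, Finset.mem_range, Finset.mem_range]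
      constructor
      · exact Nat.mod_lt _ hqrpos
      · rw [Nat.div_lt_iff_lt_mul hqrpos]
        calc c < q := hc
        _ = qW * qr := hq
        _ = qW * qr := rfl
    · intro p hp
      rw [Finset.mem_product, Finset.mem_range, Finset.mem_range] at hp
      rw [Finset.mem_range, hq]
      calc p.1 + qr * p.2 < qr + qr * p.2 := by omega
        _ = qr * (p.2 + 1) := by ring
        _ ≤ qr * qW := Nat.mul_le_mul_left _ hp.2
        _ = qW * qr := mul_comm _ _
    · intro c hc
      simp [Nat.mod_add_div]
    · intro p hp
      rw [Finset.mem_product, Finset.mem_range, Finset.mem_range] at hp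
      have h1 : (p.1 + qr * p.2) % qr = p.1 := by
        rw [Nat.add_mul_mod_self_left]
        exact Nat.mod_eq_of_lt hp.1
      have h2 : (p.1 + qr * p.2) / qr = p.2 := by
        rw [Nat.add_mul_div_left _ _ hqrpos, Nat.div_eq_of_lt hp.1]
        omega
      ext <;> simp [h1, h2]
    · intro c hc
      simp [Nat.mod_add_div]
  rw [hreindex]
  rw [Finset.sum_product]
  calc ∑ d ∈ Finset.range qr, ∑ j ∈ Finset.range qW,
        Complex.exp (2 * Real.pi * Complex.I * (a * (d + qr * j : ℕ)) / q) *
          Ξ (W * q) (W * ((d + qr * j : ℕ) : ℤ) + b)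
      = ∑ d ∈ Finset.range qr, ∑ j ∈ Finset.range qW,
        (Complex.exp (2 * Real.pi * Complex.I * (a * d) / q) * Ξ (W * q) (W * d + b)) * z ^ j := by
        refine Finset.sum_congr rfl fun d _ => Finset.sum_congr rfl fun j _ => key d j
    _ = ∑ d ∈ Finset.range qr,
        (Complex.exp (2 * Real.pi * Complex.I * (a * d) / q) * Ξ (W * q) (W * d + b)) *
          (∑ j ∈ Finset.range qW, z ^ j) := by
        refine Finset.sum_congr rfl fun d _ => ?_
        rw [Finset.mul_sum]
    _ = 0 := by
        rw [hzero]
        simp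
end

section
/- Let d, n be coprime positive integers with d·n ≡ 1 (mod 4). Then the number of representations of d·n as a sum of two squares k² + l² (with ordered pairs of integers (k, l)) equals (1/4)·∑_{|λ|²=d} ∑_{|μ|²=n} 1, and more precisely, for any weight ω on the integers: ∑_{dn = k²+l²} ω(l) = (1/4)·∑_{λ∈ℤ[i], |λ|²=d} ∑_{μ∈ℤ[i], |μ|²=n} ω(Re(μ·conj(λ))). -/
open Finset

lemma aux_norm_eq (z : GaussianInt) : Zsqrtd.norm z = z.re ^ 2 + z.im ^ 2 := by
  rw [Zsqrtd.norm_def]; ring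

lemma aux_units (v : GaussianInt) (h : Zsqrtd.norm v = 1) :
    v = 1 ∨ v = -1 ∨ v = ⟨0, 1⟩ ∨ v = ⟨0, -1⟩ := by
  rw [aux_norm_eq] at h
  obtain ⟨x, y⟩ := v
  simp only at h
  have hx1 : -1 ≤ x := by nlinarith
  have hx2 : x ≤ 1 := by nlinarith
  have hy1 : -1 ≤ y := by nlinarith
  have hy2 : y ≤ 1 := by nlinarith
  interval_cases x <;> interval_cases y <;> simp_all [Zsqrtd.ext_iff]

lemma aux_prime_of_norm_prime (π : GaussianInt) (p : ℕ) (hp : p.Prime)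
    (h : Zsqrtd.norm π = p) : Prime π := by
  rw [← UniqueFactorizationMonoid.irreducible_iff_prime]
  constructor
  · rw [← Zsqrtd.norm_eq_one_iff, h]
    simpa using hp.ne_one
  · intro a b hab
    have hnorm : a.norm.natAbs * b.norm.natAbs = p := by
      rw [← Int.natAbs_mul, ← Zsqrtd.norm_mul, ← hab, h]; exact Int.natAbs_natCast p
    rcases hp.eq_one_or_self_of_dvd a.norm.natAbs ⟨_, hnorm.symm⟩ with h1 | h1
    · exact Or.inl (Zsqrtd.norm_eq_one_iff.mp h1)
    · refine Or.inr (Zsqrtd.norm_eq_one_iff.mp ?_)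
      have hp0 := hp.pos
      rw [h1] at hnorm
      nlinarith [hnorm]

lemma aux_star_dvd {a : GaussianInt} {m : GaussianInt} (h : a ∣ star m) : star a ∣ m := by
  obtain ⟨c, hc⟩ := h
  exact ⟨star c, by rw [← star_star m, hc, star_mul']⟩

lemma aux_exists_fac : ∀ d : ℕ, Odd d → ∀ n : ℕ, Nat.Coprime d n →
    ∀ m : GaussianInt, Zsqrtd.norm m = (d * n : ℕ) →
    ∃ l u : GaussianInt, Zsqrtd.norm l = d ∧ Zsqrtd.norm u = n ∧ l * u = m := by
  intro d
  induction d using Nat.strong_induction_on with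
  | _ d ih =>
  intro hodd n hcop m hm
  rcases eq_or_ne d 1 with hd1 | hd1
  · subst hd1
    exact ⟨1, m, by simp, by simpa using hm, one_mul m⟩
  have hd0 : d ≠ 0 := by rintro rfl; simp [Nat.odd_iff] at hodd
  set p := d.minFac with hpdef
  have hp : p.Prime := Nat.minFac_prime hd1
  haveI : Fact p.Prime := ⟨hp⟩
  have hpd : p ∣ d := Nat.minFac_dvd d
  have hp2 : p ≠ 2 := by
    rintro h2; rw [h2] at hpd
    rw [Nat.odd_iff] at hodd; omega
  have hp1 : 1 < p := hp.one_lt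
  have hpn : ¬ p ∣ n := by
    intro hdvd
    have h1 : p ∣ Nat.gcd d n := Nat.dvd_gcd hpd hdvd
    rw [hcop] at h1
    have := Nat.le_of_dvd one_pos h1
    omega
  have hpdn : (p : GaussianInt) ∣ ((d * n : ℕ) : GaussianInt) :=
    Nat.cast_dvd_cast (dvd_mul_of_dvd_left hpd n)
  have hmm : m * star m = ((d * n : ℕ) : GaussianInt) := by
    have := Zsqrtd.norm_eq_mul_conj m
    rw [hm] at this
    exact_mod_cast this.symm
  by_cases hp3 : p % 4 = 3
  · -- p inert: p ∣ m and p² ∣ d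
    have hprime : Prime (p : GaussianInt) :=
      GaussianInt.prime_of_nat_prime_of_mod_four_eq_three p hp3
    have hpm : (p : GaussianInt) ∣ m := by
      rcases hprime.2.2 m (star m) (hmm ▸ hpdn) with h | h
      · exact h
      · have := aux_star_dvd h
        rwa [show star ((p : ℕ) : GaussianInt) = (p : GaussianInt) from star_natCast p] at this
    obtain ⟨m', rfl⟩ := hpm
    have hm'' : (p : ℤ) * (p : ℤ) * Zsqrtd.norm m' = ((d : ℤ) * n) := by
      rw [Zsqrtd.norm_mul, Zsqrtd.norm_natCast] at hm
      push_cast at hm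
      linear_combination hm
    have hppdvd : (p * p) ∣ d * n := by
      have : ((p * p : ℕ) : ℤ) ∣ ((d * n : ℕ) : ℤ) := ⟨Zsqrtd.norm m', by push_cast; linarith⟩
      exact_mod_cast this
    have hppd : p * p ∣ d := Nat.Coprime.dvd_of_dvd_mul_right
      (Nat.Coprime.mul (hp.coprime_iff_not_dvd.mpr hpn) (hp.coprime_iff_not_dvd.mpr hpn)) hppdvd
    obtain ⟨d', hd'⟩ := hppd
    have hd'pos : 0 < d' := Nat.pos_of_ne_zero (by rintro rfl; rw [Nat.mul_zero] at hd'; exact hd0 hd')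
    have hd'lt : d' < d := by
      rw [hd']
      calc d' = 1 * d' := (one_mul d').symm
      _ < (p * p) * d' := by
        have h11 : 1 < p * p := by nlinarith
        exact Nat.mul_lt_mul_of_lt_of_le h11 (le_refl d') hd'pos
    have hd'odd : Odd d' := by
      rcases Nat.even_or_odd d' with he | ho
      · exfalso
        have : Even d := by rw [hd']; exact Nat.even_mul.mpr (Or.inr he)
        rw [Nat.even_iff] at this; rw [Nat.odd_iff] at hodd; omega
      · exact ho
    have hcop' : d'.Coprime n := Nat.Coprime.coprime_dvd_left ⟨p * p, by rw [hd']; ring⟩ hcop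
    have hp0 : ((p : ℤ) * p) ≠ 0 := by positivity
    have hnorm' : Zsqrtd.norm m' = ((d' * n : ℕ) : ℤ) := by
      have h2 : (p : ℤ) * p * Zsqrtd.norm m' = (p : ℤ) * p * ((d' : ℤ) * n) := by
        rw [mul_assoc] at hm''
        rw [mul_assoc, hm'']
        push_cast [hd']; ring
      have := mul_left_cancel₀ hp0 h2
      push_cast
      linarith [this]
    obtain ⟨l, u, hl, hu, hlu⟩ := ih d' hd'lt hd'odd n hcop' m' hnorm'
    refine ⟨(p : GaussianInt) * l, u, ?_, hu, by rw [mul_assoc, hlu]⟩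
    rw [Zsqrtd.norm_mul, Zsqrtd.norm_natCast, hl]
    push_cast [hd']; ring
  · -- p splits
    obtain ⟨a, b, hab⟩ := Nat.Prime.sq_add_sq (p := p) hp3
    set π₀ : GaussianInt := ⟨(a : ℤ), (b : ℤ)⟩ with hπ₀def
    have hπ₀ : Zsqrtd.norm π₀ = p := by
      rw [Zsqrtd.norm_def]
      show (a : ℤ) * a - (-1) * b * b = p
      have : (a : ℤ) ^ 2 + (b : ℤ) ^ 2 = p := by exact_mod_cast hab
      nlinarith [this]
    have hprime : Prime π₀ := aux_prime_of_norm_prime π₀ p hp hπ₀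
    have hπp : π₀ * star π₀ = ((p : ℕ) : GaussianInt) := by
      have := Zsqrtd.norm_eq_mul_conj π₀
      rw [hπ₀] at this
      exact_mod_cast this.symm
    have hdvd : π₀ ∣ m * star m := by
      rw [hmm]
      exact dvd_trans ⟨star π₀, hπp.symm⟩ hpdn
    obtain ⟨π, hπnorm, hπm⟩ : ∃ π : GaussianInt, Zsqrtd.norm π = p ∧ π ∣ m := by
      rcases hprime.2.2 m (star m) hdvd with h | h
      · exact ⟨π₀, hπ₀, h⟩
      · exact ⟨star π₀, by rw [Zsqrtd.norm_conj, hπ₀], aux_star_dvd h⟩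
    obtain ⟨m', rfl⟩ := hπm
    have hm'' : (p : ℤ) * Zsqrtd.norm m' = ((d : ℤ) * n) := by
      rw [Zsqrtd.norm_mul, hπnorm] at hm
      push_cast at hm
      linear_combination hm
    obtain ⟨d', hd'⟩ := hpd
    have hd'pos : 0 < d' := Nat.pos_of_ne_zero (by rintro rfl; rw [Nat.mul_zero] at hd'; exact hd0 hd')
    have hd'lt : d' < d := by
      rw [hd']
      calc d' = 1 * d' := (one_mul d').symm
      _ < p * d' := Nat.mul_lt_mul_of_lt_of_le hp1 (le_refl d') hd'pos
    have hd'odd : Odd d' := by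
      rcases Nat.even_or_odd d' with he | ho
      · exfalso
        have : Even d := by rw [hd']; exact Nat.even_mul.mpr (Or.inr he)
        rw [Nat.even_iff] at this; rw [Nat.odd_iff] at hodd; omega
      · exact ho
    have hcop' : d'.Coprime n := Nat.Coprime.coprime_dvd_left ⟨p, by rw [hd']; ring⟩ hcop
    have hp0 : ((p : ℤ)) ≠ 0 := by positivity
    have hnorm' : Zsqrtd.norm m' = ((d' * n : ℕ) : ℤ) := by
      have h2 : (p : ℤ) * Zsqrtd.norm m' = (p : ℤ) * ((d' : ℤ) * n) := by
        rw [hm'']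
        push_cast [hd']; ring
      have := mul_left_cancel₀ hp0 h2
      push_cast
      linarith [this]
    obtain ⟨l, u, hl, hu, hlu⟩ := ih d' hd'lt hd'odd n hcop' m' hnorm'
    refine ⟨π * l, u, ?_, hu, by rw [mul_assoc, hlu]⟩
    rw [Zsqrtd.norm_mul, hπnorm, hl]
    push_cast [hd']; ring

lemma aux_unique_fac (d n : ℕ) (hd : 0 < d) (hcop : Nat.Coprime d n)
    (l u l' u' : GaussianInt)
    (hl : Zsqrtd.norm l = d) (hl' : Zsqrtd.norm l' = d)
    (hu : Zsqrtd.norm u = n) (hu' : Zsqrtd.norm u' = n)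
    (heq : l * u = l' * u') :
    ∃ v : GaussianInt, Zsqrtd.norm v = 1 ∧ l = l' * v ∧ u' = v * u := by
  have hcopZ : IsCoprime ((d : ℕ) : GaussianInt) ((n : ℕ) : GaussianInt) := by
    have h1 : IsCoprime (d : ℤ) (n : ℤ) := Int.isCoprime_iff_gcd_eq_one.mpr (by
      rwa [Int.gcd_natCast_natCast])
    have := h1.map (Int.castRingHom GaussianInt)
    simpa using this
  have hl'd : l' ∣ ((d : ℕ) : GaussianInt) := by
    refine ⟨star l', ?_⟩
    have := Zsqrtd.norm_eq_mul_conj l'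
    rw [hl'] at this
    exact_mod_cast this
  have hun : u ∣ ((n : ℕ) : GaussianInt) := by
    refine ⟨star u, ?_⟩
    have := Zsqrtd.norm_eq_mul_conj u
    rw [hu] at this
    exact_mod_cast this
  have hc : IsCoprime l' u :=
    (hcopZ.of_isCoprime_of_dvd_left hl'd).of_isCoprime_of_dvd_right hun
  have hdvd : l' ∣ l * u := heq ▸ Dvd.intro u' rfl
  obtain ⟨v, hv⟩ := hc.dvd_of_dvd_mul_right hdvd
  have hl'0 : l' ≠ 0 := by
    intro h0
    rw [h0, Zsqrtd.norm_zero] at hl'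
    exact_mod_cast absurd hl'.symm (by exact_mod_cast hd.ne')
  have hnv : Zsqrtd.norm v = 1 := by
    have hd0 : (d : ℤ) ≠ 0 := by exact_mod_cast hd.ne'
    have h1 : (d : ℤ) * Zsqrtd.norm v = (d : ℤ) := by
      conv_rhs => rw [← hl]
      rw [hv, Zsqrtd.norm_mul, hl']
    exact mul_left_cancel₀ hd0 (by rw [mul_one]; exact h1)
  refine ⟨v, hnv, hv, ?_⟩
  have : l' * u' = l' * (v * u) := by
    rw [← heq, hv]; ring
  exact mul_left_cancel₀ hl'0 this

lemma aux_fiber (d n : ℕ) (hd : 0 < d) (hcop : Nat.Coprime d n) (hodd : Odd d)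
    (T : Finset (GaussianInt × GaussianInt))
    (hT : ∀ p : GaussianInt × GaussianInt,
      p ∈ T ↔ (Zsqrtd.norm p.1 = (d : ℤ) ∧ Zsqrtd.norm p.2 = (n : ℤ)))
    (M : GaussianInt) (hM : Zsqrtd.norm M = ((d * n : ℕ) : ℤ)) :
    (T.filter (fun p => p.2 * star p.1 = M)).card = 4 := by
  obtain ⟨l, u, hl, hu, hlu⟩ := aux_exists_fac d hodd n hcop M hM
  have hsl : Zsqrtd.norm (star l) = (d : ℤ) := by rw [Zsqrtd.norm_conj]; exact hl
  have hsl0 : star l ≠ 0 := by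
    intro h0
    rw [h0, Zsqrtd.norm_zero] at hsl
    exact absurd hsl.symm (by exact_mod_cast hd.ne')
  have hprod : u * star (star l) = M := by rw [star_star, mul_comm]; exact hlu
  have key : T.filter (fun p => p.2 * star p.1 = M)
      = (({1, -1, ⟨0,1⟩, ⟨0,-1⟩} : Finset GaussianInt).image
          (fun v => (star l * v, u * v))) := by
    ext p
    simp only [Finset.mem_filter, Finset.mem_image, Finset.mem_insert, Finset.mem_singleton]
    constructor
    · rintro ⟨hpT, hpM⟩
      obtain ⟨h1, h2⟩ := (hT p).mp hpT
      have heq : star (star l) * u = star p.1 * p.2 := by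
        rw [mul_comm, hprod, mul_comm, hpM]
      obtain ⟨v, hnv, hveq1, hveq2⟩ := aux_unique_fac d n hd hcop
        (star (star l)) u (star p.1) p.2
        (by rw [Zsqrtd.norm_conj, hsl]) (by rw [Zsqrtd.norm_conj]; exact h1) hu h2 heq
      -- hveq1 : star (star l) = star p.1 * v ; hveq2 : p.2 = v * u
      have hvv : v * star v = 1 := by
        have := Zsqrtd.norm_eq_mul_conj v
        rw [hnv] at this
        exact_mod_cast this.symm
      have hp1 : p.1 = star l * v := by
        have h3 : star l = star (star p.1 * v) := by rw [← hveq1, star_star]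
        rw [star_mul', star_star] at h3
        calc p.1 = p.1 * 1 := (mul_one _).symm
        _ = p.1 * (star v * v) := by rw [mul_comm (star v), hvv]
        _ = (p.1 * star v) * v := by ring
        _ = star l * v := by rw [← h3]
      refine ⟨v, ?_, ?_⟩
      · exact aux_units v hnv
      · refine (Prod.ext ?_ ?_).symm
        · simpa using hp1
        · simpa [mul_comm] using hveq2
    · rintro ⟨v, hvmem, rfl⟩
      have hnv : Zsqrtd.norm v = 1 := by
        rcases hvmem with rfl | rfl | rfl | rfl <;> simp [Zsqrtd.norm_def]
      have hvv : v * star v = 1 := by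
        have := Zsqrtd.norm_eq_mul_conj v
        rw [hnv] at this
        exact_mod_cast this.symm
      constructor
      · rw [hT]
        constructor
        · simp only [Zsqrtd.norm_mul, hsl, hnv, mul_one]
        · simp only [Zsqrtd.norm_mul, hu, hnv, mul_one]
      · show u * v * star (star l * v) = M
        rw [star_mul']
        calc u * v * (star (star l) * star v) = (u * star (star l)) * (v * star v) := by ring
        _ = M := by rw [hvv, hprod, mul_one]
  rw [key]
  rw [Finset.card_image_of_injective _ (fun a b hab => by
    have := congrArg Prod.fst hab
    exact mul_left_cancel₀ hsl0 this)]
  decide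

/-- Factorization of representations as sums of two squares over the Gaussian integers:
for coprime positive integers `d, n` with `d·n ≡ 1 (mod 4)` and any weight `ω : ℤ → ℝ`,
`∑_{dn = k²+l²} ω(l) = (1/4)·∑_{λ ∈ ℤ[i], |λ|²=d} ∑_{μ ∈ ℤ[i], |μ|²=n} ω(Re(μ·conj λ))`.
(The finite sets of representations are given by finsets with the indicated membership.) -/
theorem sum_two_squares_gaussian_factorization (d n : ℕ) (hd : 0 < d) (hn : 0 < n)
    (hcop : Nat.Coprime d n) (hmod : (d * n) % 4 = 1) (ω : ℤ → ℝ)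
    (S : Finset (ℤ × ℤ)) (hS : ∀ p : ℤ × ℤ, p ∈ S ↔ p.1 ^ 2 + p.2 ^ 2 = (d * n : ℤ))
    (T : Finset (GaussianInt × GaussianInt))
    (hT : ∀ p : GaussianInt × GaussianInt,
      p ∈ T ↔ (Zsqrtd.norm p.1 = (d : ℤ) ∧ Zsqrtd.norm p.2 = (n : ℤ))) :
    ∑ p ∈ S, ω p.2 =
      (1 / 4) * ∑ p ∈ T, ω (p.2.re * p.1.re + p.2.im * p.1.im) := by
  have hodd : Odd d := by
    have h2 : (d * n) % 2 = 1 := by omega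
    exact (Nat.odd_mul.mp (Nat.odd_iff.mpr h2)).1
  -- swap symmetry of S
  have hswap : ∑ p ∈ S, ω p.2 = ∑ p ∈ S, ω p.1 := by
    refine Finset.sum_nbij' (i := fun p : ℤ × ℤ => (p.2, p.1))
      (j := fun p : ℤ × ℤ => (p.2, p.1)) ?_ ?_ ?_ ?_ ?_
    · intro p hp
      rw [hS] at hp ⊢
      linarith [hp]
    · intro p hp
      rw [hS] at hp ⊢
      linarith [hp]
    · intro p _; rfl
    · intro p _; rfl
    · intro p _; rfl
  -- the real part identity
  have hre : ∀ p : GaussianInt × GaussianInt,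
      (p.2 * star p.1).re = p.2.re * p.1.re + p.2.im * p.1.im := by
    intro p
    rw [Zsqrtd.re_mul, Zsqrtd.re_star, Zsqrtd.im_star]
    ring
  set f : GaussianInt × GaussianInt → ℤ × ℤ :=
    fun p => ((p.2 * star p.1).re, (p.2 * star p.1).im) with hfdef
  have hmaps : ∀ p ∈ T, f p ∈ S := by
    intro p hp
    obtain ⟨h1, h2⟩ := (hT p).mp hp
    rw [hS]
    have : (f p).1 ^ 2 + (f p).2 ^ 2 = Zsqrtd.norm (p.2 * star p.1) := by
      rw [aux_norm_eq]
    rw [this, Zsqrtd.norm_mul, Zsqrtd.norm_conj, h1, h2]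
    push_cast
    ring
  have hfib := Finset.sum_fiberwise_of_maps_to hmaps
    (fun p => ω (p.2.re * p.1.re + p.2.im * p.1.im))
  have hinner : ∀ m ∈ S,
      (∑ p ∈ T.filter (fun p => f p = m), ω (p.2.re * p.1.re + p.2.im * p.1.im))
        = 4 * ω m.1 := by
    intro m hm
    have hMnorm : Zsqrtd.norm (⟨m.1, m.2⟩ : GaussianInt) = ((d * n : ℕ) : ℤ) := by
      rw [aux_norm_eq]
      have := (hS m).mp hm
      push_cast
      exact this
    have hfilter : T.filter (fun p => f p = m)
        = T.filter (fun p => p.2 * star p.1 = (⟨m.1, m.2⟩ : GaussianInt)) := by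
      apply Finset.filter_congr
      intro p _
      constructor
      · intro h
        have h1 := congrArg Prod.fst h
        have h2 := congrArg Prod.snd h
        exact Zsqrtd.ext h1 h2
      · intro h
        have h1 : (p.2 * star p.1).re = m.1 := by rw [h]
        have h2 : (p.2 * star p.1).im = m.2 := by rw [h]
        exact Prod.ext h1 h2
    have hcard : (T.filter (fun p => f p = m)).card = 4 := by
      rw [hfilter]
      exact aux_fiber d n hd hcop hodd T hT _ hMnorm
    have hconst : ∀ p ∈ T.filter (fun p => f p = m),
        ω (p.2.re * p.1.re + p.2.im * p.1.im) = ω m.1 := by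
      intro p hp
      rw [Finset.mem_filter] at hp
      rw [← hre p]
      have := congrArg Prod.fst hp.2
      simp only [hfdef] at this
      rw [this]
    rw [Finset.sum_congr rfl hconst, Finset.sum_const, hcard]
    simp
  have htotal : ∑ p ∈ T, ω (p.2.re * p.1.re + p.2.im * p.1.im)
      = 4 * ∑ m ∈ S, ω m.1 := by
    rw [← hfib, Finset.sum_congr rfl hinner, Finset.mul_sum]
  rw [htotal, hswap]
  ring
end
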